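/- arXiv:1509.02249 — 4 statements merged into one kernel-verified Lean document; each statement's English description precedes it below -/
import Mathlib

section
/- Let n ≥ 1 and ℓ ≥ 1 be integers and let p be a real number with 0 < p ≤ 1/2; set q := 1 − p and α := p/q. Then μ_p(F^ℓ) ≤ α^ℓ, and consequently μ_p(tilde{F}^ℓ) ≤ α^{ℓ+1}. -/
open Finset

open scoped Classical

noncomputable section

/-- The `p`-weight of a family of subsets of `[n] = {1,…,n}`. -/
def mu (n : ℕ) (p : ℝ) (𝓕 : Finset (Finset ℕ)) : ℝ :=
  ∑ F ∈ 𝓕, p ^ F.card * (1 - p) ^ (n - F.card)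

/-- Two families are cross `t`-intersecting. -/
def CrossIntersecting (t : ℕ) (𝓐 𝓑 : Finset (Finset ℕ)) : Prop :=
  ∀ A ∈ 𝓐, ∀ B ∈ 𝓑, t ≤ (A ∩ B).card

/-- The Frankl family `F_i^ℓ = {F ⊆ [n] : |F ∩ [ℓ+2i]| ≥ ℓ+i}`. -/
def FF (n ℓ i : ℕ) : Finset (Finset ℕ) :=
  (Finset.Icc 1 n).powerset.filter fun F => ℓ + i ≤ (F ∩ Finset.Icc 1 (ℓ + 2 * i)).card

/-- `F` reaches level `ℓ`: there is `0 ≤ j ≤ n` with `2|F ∩ [j]| ≥ j + ℓ`. -/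
def Reaches (n ℓ : ℕ) (F : Finset ℕ) : Prop :=
  ∃ j ≤ n, j + ℓ ≤ 2 * (F ∩ Finset.Icc 1 j).card

/-- The number of steps `0 ≤ j ≤ n` at which `F` hits level `ℓ`, i.e. `2|F ∩ [j]| = j + ℓ`. -/
def hitCount (n ℓ : ℕ) (F : Finset ℕ) : ℕ :=
  ((Finset.range (n + 1)).filter fun j => 2 * (F ∩ Finset.Icc 1 j).card = j + ℓ).card

/-- `F^ℓ`: all subsets of `[n]` reaching level `ℓ`. -/
def Fwalk (n ℓ : ℕ) : Finset (Finset ℕ) :=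
  (Finset.Icc 1 n).powerset.filter fun F => Reaches n ℓ F

/-- `tilde F^ℓ`: all subsets of `[n]` reaching level `ℓ+1`. -/
def Ftilde (n ℓ : ℕ) : Finset (Finset ℕ) :=
  (Finset.Icc 1 n).powerset.filter fun F => Reaches n (ℓ + 1) F

/-- `hat F^ℓ`: subsets not reaching level `ℓ+1` and hitting level `ℓ` exactly once. -/
def Fhat (n ℓ : ℕ) : Finset (Finset ℕ) :=
  (Finset.Icc 1 n).powerset.filter fun F => ¬ Reaches n (ℓ + 1) F ∧ hitCount n ℓ F = 1

/-- `ddot F^ℓ`: subsets not reaching level `ℓ+1` and hitting level `ℓ` at least twice. -/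
def Fddot (n ℓ : ℕ) : Finset (Finset ℕ) :=
  (Finset.Icc 1 n).powerset.filter fun F => ¬ Reaches n (ℓ + 1) F ∧ 2 ≤ hitCount n ℓ F

/-- The `(i,j)`-shift of a single set `F`, relative to the family `𝓕`. -/
def shiftSet (i j : ℕ) (𝓕 : Finset (Finset ℕ)) (F : Finset ℕ) : Finset ℕ :=
  if j ∈ F ∧ i ∉ F ∧ insert i (F.erase j) ∉ 𝓕 then insert i (F.erase j) else F

/-- The `(i,j)`-shift `s_{ij}(𝓕)` of a family `𝓕`. -/
def shiftFam (i j : ℕ) (𝓕 : Finset (Finset ℕ)) : Finset (Finset ℕ) :=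
  𝓕.image (shiftSet i j 𝓕)

/-- A family is shifted if all shifts `s_{ij}`, `1 ≤ i < j ≤ n`, fix it. -/
def Shifted (n : ℕ) (𝓕 : Finset (Finset ℕ)) : Prop :=
  ∀ i j : ℕ, 1 ≤ i → i < j → j ≤ n → shiftFam i j 𝓕 = 𝓕

/-- A family of subsets of `[n]` is inclusion maximal. -/
def InclMax (n : ℕ) (𝓕 : Finset (Finset ℕ)) : Prop :=
  ∀ F ∈ 𝓕, ∀ F' : Finset ℕ, F ⊆ F' → F' ⊆ Finset.Icc 1 n → F' ∈ 𝓕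

/-- `λ(𝓕)`: the largest `λ ≥ 0` such that every member of `𝓕` reaches level `λ`. -/
def lam (n : ℕ) (𝓕 : Finset (Finset ℕ)) : ℕ :=
  Nat.findGreatest (fun ℓ => ∀ F ∈ 𝓕, Reaches n ℓ F) n

/-- Two families of subsets of `[n]` are isomorphic via a permutation of `[n]`. -/
def Isom (n : ℕ) (𝓖₁ 𝓖₂ : Finset (Finset ℕ)) : Prop :=
  ∃ σ : Equiv.Perm ℕ, (∀ k ∈ Finset.Icc 1 n, σ k ∈ Finset.Icc 1 n) ∧
    𝓖₁ = 𝓖₂.image fun G => G.image σ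

/-- The quantity `f(ℓ, i, p)` from Ahlswede–Khachatrian type estimates. -/
def fLP (ℓ i : ℕ) (p : ℝ) : ℝ :=
  (p / (1 - p)) ^ (ℓ + 1) +
    (Nat.choose (ℓ + 2 * i) i : ℝ) * ((ℓ + 1 : ℝ) / (ℓ + i + 1)) * p ^ (ℓ + i) *
      (1 - p) ^ i * (1 - p / (1 - p))

/-- The walk `D_s^t(i) = [t−1] ∪ {t+s,…,t+2s} ∪ {t+2s+i+2k : k ≥ 1} ∩ [n]`. -/
def DD (n t s i : ℕ) : Finset ℕ :=
  Finset.Icc 1 (t - 1) ∪ Finset.Icc (t + s) (t + 2 * s) ∪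
    ((Finset.Icc 1 n).filter fun m => ∃ k ∈ Finset.Icc 1 n, m = t + 2 * s + i + 2 * k)

end

/-! Removing the first coordinate: whether or not `1 ∈ F`, the walk `j ↦ 2|F ∩ [j]| - j` makes a
first step `±1`, after which reaching level `ℓ` amounts to reaching level `ℓ ∓ 1` on the
remaining `n - 1` coordinates. Hence `μ_p(F^{k+1})` on `[n+1]` is
`p μ_p(F^k) + q μ_p(F^{k+2})` on `[n]`, and `α^ℓ` satisfies this recursion with equality because
`p / α + q α = q + p = 1`; induction on `n` gives `μ_p(F^ℓ) ≤ α^ℓ`, the gambler's-ruin bound. -/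

namespace Finset

theorem powerset_map {α β : Type*} (f : α ↪ β) (s : Finset α) :
    (s.map f).powerset = s.powerset.map (mapEmbedding f).toEmbedding := by
  ext t
  simp only [mem_powerset, mem_map, RelEmbedding.coe_toEmbedding, mapEmbedding_apply,
    subset_map_iff]
  exact ⟨fun ⟨u, hu, h⟩ => ⟨u, hu, h.symm⟩, fun ⟨u, hu, h⟩ => ⟨u, hu, h.symm⟩⟩

theorem Icc_one_succ_eq_insert_map (n : ℕ) :
    Icc 1 (n + 1) = insert 1 ((Icc 1 n).map (addRightEmbedding 1)) := by
  rw [map_add_right_Icc, insert_Icc_add_one_left_eq_Icc (by omega)]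

theorem one_notMem_map_add_one {G : Finset ℕ} (h0 : 0 ∉ G) :
    1 ∉ G.map (addRightEmbedding 1) := by
  simpa using h0

theorem sum_powerset_Icc_one_succ {M : Type*} [AddCommMonoid M] (n : ℕ) (f : Finset ℕ → M) :
    ∑ F ∈ (Icc 1 (n + 1)).powerset, f F =
      ∑ G ∈ (Icc 1 n).powerset,
        (f (G.map (addRightEmbedding 1)) + f (insert 1 (G.map (addRightEmbedding 1)))) := by
  rw [Icc_one_succ_eq_insert_map, sum_powerset_insert (one_notMem_map_add_one (by simp)),
    powerset_map, sum_map, sum_map, ← sum_add_distrib]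
  rfl

end Finset

theorem zero_notMem_of_mem_powerset_Icc_one {n : ℕ} {G : Finset ℕ}
    (hG : G ∈ (Icc 1 n).powerset) : 0 ∉ G :=
  fun h => by simpa using mem_powerset.1 hG h

theorem card_map_add_one_inter_Icc {G : Finset ℕ} (h0 : 0 ∉ G) (j : ℕ) :
    (G.map (addRightEmbedding 1) ∩ Icc 1 (j + 1)).card = (G ∩ Icc 1 j).card := by
  rw [Icc_one_succ_eq_insert_map, inter_insert_of_notMem (one_notMem_map_add_one h0),
    ← map_inter, card_map]

theorem card_insert_one_map_add_one_inter_Icc {G : Finset ℕ} (h0 : 0 ∉ G) (j : ℕ) :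
    (insert 1 (G.map (addRightEmbedding 1)) ∩ Icc 1 (j + 1)).card = (G ∩ Icc 1 j).card + 1 := by
  rw [Icc_one_succ_eq_insert_map, ← insert_inter_distrib, ← map_inter,
    card_insert_of_notMem (one_notMem_map_add_one (by simp [h0])), card_map]

theorem reaches_succ_succ_iff {n k : ℕ} {F : Finset ℕ} :
    Reaches (n + 1) (k + 1) F ↔ ∃ j ≤ n, j + 1 + (k + 1) ≤ 2 * (F ∩ Icc 1 (j + 1)).card := by
  constructor
  · rintro ⟨_ | j, hj, hF⟩
    · simp at hF
    · exact ⟨j, by omega, hF⟩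
  · rintro ⟨j, hj, hF⟩
    exact ⟨j + 1, by omega, hF⟩

theorem reaches_insert_one_map_add_one_iff {n k : ℕ} {G : Finset ℕ} (h0 : 0 ∉ G) :
    Reaches (n + 1) (k + 1) (insert 1 (G.map (addRightEmbedding 1))) ↔ Reaches n k G := by
  rw [reaches_succ_succ_iff, Reaches]
  simp only [card_insert_one_map_add_one_inter_Icc h0]
  exact exists_congr fun j => and_congr_right fun _ => by omega

theorem reaches_map_add_one_iff {n k : ℕ} {G : Finset ℕ} (h0 : 0 ∉ G) :
    Reaches (n + 1) (k + 1) (G.map (addRightEmbedding 1)) ↔ Reaches n (k + 2) G := by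
  rw [reaches_succ_succ_iff, Reaches]
  simp only [card_map_add_one_inter_Icc h0]
  exact exists_congr fun j => and_congr_right fun _ => by omega

theorem mu_filter_powerset_Icc_succ (n : ℕ) (p : ℝ) (P : Finset ℕ → Prop) :
    mu (n + 1) p ((Icc 1 (n + 1)).powerset.filter P) =
      p * mu n p ((Icc 1 n).powerset.filter fun G => P (insert 1 (G.map (addRightEmbedding 1)))) +
        (1 - p) * mu n p ((Icc 1 n).powerset.filter fun G => P (G.map (addRightEmbedding 1))) := by
  simp only [mu, sum_filter, sum_powerset_Icc_one_succ, mul_sum, ← sum_add_distrib]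
  refine sum_congr rfl fun G hG => ?_
  have h0 := zero_notMem_of_mem_powerset_Icc_one hG
  have hcard : G.card ≤ n := by simpa using card_le_card (mem_powerset.1 hG)
  rw [card_insert_of_notMem (one_notMem_map_add_one h0), card_map,
    show n + 1 - G.card = n - G.card + 1 by omega, Nat.add_sub_add_right]
  split_ifs <;> ring

theorem mu_Fwalk_succ_succ (n k : ℕ) (p : ℝ) :
    mu (n + 1) p (Fwalk (n + 1) (k + 1)) =
      p * mu n p (Fwalk n k) + (1 - p) * mu n p (Fwalk n (k + 2)) := by
  rw [Fwalk, mu_filter_powerset_Icc_succ]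
  congr 3 <;> refine filter_congr fun G hG => ?_
  · exact reaches_insert_one_map_add_one_iff (zero_notMem_of_mem_powerset_Icc_one hG)
  · exact reaches_map_add_one_iff (zero_notMem_of_mem_powerset_Icc_one hG)

theorem Fwalk_zero_succ (k : ℕ) : Fwalk 0 (k + 1) = ∅ := by
  refine filter_false_of_mem fun F _ ⟨j, hj, hF⟩ => ?_
  obtain rfl : j = 0 := by omega
  simp at hF

theorem mu_le_one {n : ℕ} {p : ℝ} (hp₀ : 0 ≤ p) (hp₁ : p ≤ 1) {𝓕 : Finset (Finset ℕ)}
    (h𝓕 : 𝓕 ⊆ (Icc 1 n).powerset) : mu n p 𝓕 ≤ 1 := by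
  have hq : 0 ≤ 1 - p := sub_nonneg.2 hp₁
  calc mu n p 𝓕 ≤ mu n p (Icc 1 n).powerset :=
        sum_le_sum_of_subset_of_nonneg h𝓕 fun F _ _ => by positivity
    _ = 1 := by simpa [mu] using sum_pow_mul_eq_add_pow p (1 - p) (Icc 1 n)

theorem mul_pow_add_mul_pow_add_two {p : ℝ} (hp : p ≠ 1) (k : ℕ) :
    p * (p / (1 - p)) ^ k + (1 - p) * (p / (1 - p)) ^ (k + 2) = (p / (1 - p)) ^ (k + 1) := by
  have hα : (1 - p) * (p / (1 - p)) = p := mul_div_cancel₀ p (sub_ne_zero.2 hp.symm)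
  linear_combination ((p / (1 - p)) ^ k * (p / (1 - p) - 1)) * hα

theorem mu_Fwalk_le {p : ℝ} (hp₀ : 0 ≤ p) (hp₁ : p < 1) :
    ∀ n ℓ : ℕ, mu n p (Fwalk n ℓ) ≤ (p / (1 - p)) ^ ℓ
  | n, 0 => by rw [pow_zero]; exact mu_le_one hp₀ hp₁.le (filter_subset _ _)
  | 0, k + 1 => by rw [Fwalk_zero_succ, mu, sum_empty]; positivity
  | n + 1, k + 1 => by
    have hq : 0 ≤ 1 - p := sub_nonneg.2 hp₁.le
    calc mu (n + 1) p (Fwalk (n + 1) (k + 1))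
        = p * mu n p (Fwalk n k) + (1 - p) * mu n p (Fwalk n (k + 2)) :=
          mu_Fwalk_succ_succ n k p
      _ ≤ p * (p / (1 - p)) ^ k + (1 - p) * (p / (1 - p)) ^ (k + 2) := by
          gcongr <;> apply mu_Fwalk_le hp₀ hp₁
      _ = (p / (1 - p)) ^ (k + 1) := mul_pow_add_mul_pow_add_two hp₁.ne k

theorem statement_2_general (n ℓ : ℕ) (p : ℝ)
    (hp : 0 < p) (hp' : p ≤ 1 / 2) :
    mu n p (Fwalk n ℓ) ≤ (p / (1 - p)) ^ ℓ ∧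
      mu n p (Ftilde n ℓ) ≤ (p / (1 - p)) ^ (ℓ + 1) := by
  have hp₁ : p < 1 := by linarith
  exact ⟨mu_Fwalk_le hp.le hp₁ n ℓ, mu_Fwalk_le hp.le hp₁ n (ℓ + 1)⟩

/-- `μ_p(F^ℓ) ≤ α^ℓ` and `μ_p(tilde F^ℓ) ≤ α^{ℓ+1}`. -/
theorem statement_2 (n ℓ : ℕ) (hn : 1 ≤ n) (hl : 1 ≤ ℓ) (p : ℝ)
    (hp : 0 < p) (hp' : p ≤ 1 / 2) :
    mu n p (Fwalk n ℓ) ≤ (p / (1 - p)) ^ ℓ ∧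
      mu n p (Ftilde n ℓ) ≤ (p / (1 - p)) ^ (ℓ + 1) :=
  statement_2_general n ℓ p hp hp'
end

section
/- Let t ≥ 2 and s ≥ 0 be integers, let n ≥ t + 2s + 3, and let p be real with 0 < p ≤ 1/2; set q := 1 − p and α := p/q. Let A, B ⊆ 2^[n] be shifted, inclusion maximal, cross t-intersecting families, suppose D_s^t(1) ∈ A, let i_max := n − t − 2s − 1 and I := max{ i : 1 ≤ i ≤ i_max, D_s^t(i) ∈ A }. If I ≠ i_max, then (1) μ_p(F_s^t \ A) ≥ C(t+s−1, s)·p^{t+s}·q^{s+I+1}·(1 − α), and (2) μ_p(B \ F_s^t) ≤ α^{t+I}. -/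
/-!
Encode `F ⊆ [n]` as the walk that steps up at the elements of `F` and down elsewhere. A shifted,
inclusion maximal family contains every set that meets each prefix `[m]` at least as often as some
member does (`mem_of_prefixLE`): such a set is reached from that member by shifts and additions.

(1) By maximality of `I`, `D_s^t(I+1) ∉ 𝓐`. Every set `T ∪ [t+s, t+2s] ∪ R` with `T` a
`(t-1)`-subset of `[t+s-1]` and `R ⊆ (t+2s+I+1, n]` a walk that never reaches height `1` lies in
`F_s^t` and is dominated by `D_s^t(I+1)`, so it is missing from `𝓐`. These sets weigh
`C(t+s-1, s) p^(t+s) q^(s+I+1)` times the probability that a walk stays below height `1`,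
which is at least `1 - α`.

(2) If `B ∈ 𝓑 \ F_s^t` never reached height `t+I`, the complement of `B` together with the first
`t-1` elements of `B` would dominate `D_s^t(I) ∈ 𝓐`, hence lie in `𝓐` while meeting `B` in only
`t-1` elements. So `𝓑 \ F_s^t` consists of walks reaching height `t+I`, of total weight at most
`α^(t+I)` by the gambler's-ruin recursion `R(ℓ) = q R(ℓ+1) + p R(ℓ-1)`.
-/

open Finset

open scoped Classical

section

variable {p : ℝ}

lemma mu_mono (n : ℕ) (hp : 0 ≤ p) (hp1 : p ≤ 1) {𝓕 𝓖 : Finset (Finset ℕ)} (h : 𝓕 ⊆ 𝓖) :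
    mu n p 𝓕 ≤ mu n p 𝓖 :=
  sum_le_sum_of_subset_of_nonneg h fun _ _ _ => by
    have : 0 ≤ 1 - p := by linarith
    positivity

lemma mu_powerset (X : Finset ℕ) : mu #X p X.powerset = 1 := by
  rw [mu, sum_pow_mul_eq_add_pow]
  simp

lemma mu_powersetCard (m k : ℕ) (X : Finset ℕ) :
    mu m p (X.powersetCard k) = (#X).choose k * (p ^ k * (1 - p) ^ (m - k)) := by
  rw [mu, sum_congr rfl fun T hT => by rw [(mem_powersetCard.1 hT).2], sum_const,
    card_powersetCard, nsmul_eq_mul]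

lemma union_inter_eq_left_of_disjoint {X Y T R : Finset ℕ} (hXY : Disjoint X Y) (hT : T ⊆ X)
    (hR : R ⊆ Y) : (T ∪ R) ∩ X = T := by
  rw [union_inter_distrib_right, inter_eq_left.2 hT,
    disjoint_iff_inter_eq_empty.1 (hXY.symm.mono_left hR), union_empty]

lemma mu_image_union {X Y : Finset ℕ} (hXY : Disjoint X Y) {𝓣 𝓡 : Finset (Finset ℕ)}
    (h𝓣 : 𝓣 ⊆ X.powerset) (h𝓡 : 𝓡 ⊆ Y.powerset) :
    mu (#X + #Y) p ((𝓣 ×ˢ 𝓡).image fun TR => TR.1 ∪ TR.2) = mu #X p 𝓣 * mu #Y p 𝓡 := by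
  have hT : ∀ T ∈ 𝓣, T ⊆ X := fun T hT => mem_powerset.1 (h𝓣 hT)
  have hR : ∀ R ∈ 𝓡, R ⊆ Y := fun R hR => mem_powerset.1 (h𝓡 hR)
  have hinj : Set.InjOn (fun TR : Finset ℕ × Finset ℕ => TR.1 ∪ TR.2) ↑(𝓣 ×ˢ 𝓡) := by
    rintro ⟨T, R⟩ hTR ⟨T', R'⟩ hTR' h
    obtain ⟨hT₁, hR₁⟩ := mem_product.1 hTR
    obtain ⟨hT₂, hR₂⟩ := mem_product.1 hTR'
    have hX₁ := union_inter_eq_left_of_disjoint hXY (hT T hT₁) (hR R hR₁)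
    have hX₂ := union_inter_eq_left_of_disjoint hXY (hT T' hT₂) (hR R' hR₂)
    have hY₁ := union_comm T R ▸ union_inter_eq_left_of_disjoint hXY.symm (hR R hR₁) (hT T hT₁)
    have hY₂ := union_comm T' R' ▸
      union_inter_eq_left_of_disjoint hXY.symm (hR R' hR₂) (hT T' hT₂)
    simp only at h
    exact Prod.ext (hX₁.symm.trans (h ▸ hX₂)) (hY₁.symm.trans (h ▸ hY₂))
  rw [mu, sum_image hinj, sum_product, mu, mu, sum_mul]
  refine sum_congr rfl fun T hT' => ?_
  rw [mul_sum]
  refine sum_congr rfl fun R hR' => ?_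
  have hTX := card_le_card (hT T hT')
  have hRY := card_le_card (hR R hR')
  rw [card_union_of_disjoint ((hXY.mono_left (hT T hT')).mono_right (hR R hR')),
    show #X + #Y - (#T + #R) = (#X - #T) + (#Y - #R) by omega]
  ring

/-- `Reaches n ℓ` for the walk of `F` on the ground set `(a, a + n]` instead of `[n]`. -/
def ReachesAbove (a n ℓ : ℕ) (F : Finset ℕ) : Prop :=
  ∃ j ≤ n, j + ℓ ≤ 2 * #(F ∩ Icc (a + 1) (a + j))

noncomputable def reachFamily (a n ℓ : ℕ) : Finset (Finset ℕ) :=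
  (Icc (a + 1) (a + n)).powerset.filter (ReachesAbove a n ℓ)

lemma Icc_add_one_eq_insert (a j : ℕ) :
    Icc (a + 1) (a + (j + 1)) = insert (a + 1) (Icc (a + 1 + 1) (a + 1 + j)) := by
  rw [insert_Icc_add_one_left_eq_Icc (by omega), add_right_comm, add_assoc]

lemma reachesAbove_succ_iff {a n ℓ : ℕ} {F : Finset ℕ} (ha : a + 1 ∉ F) :
    ReachesAbove a (n + 1) (ℓ + 1) F ↔ ReachesAbove (a + 1) n (ℓ + 2) F := by
  constructor
  · rintro ⟨_ | j, hj, h⟩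
    · simp at h
    · refine ⟨j, by omega, ?_⟩
      rw [Icc_add_one_eq_insert, inter_insert_of_notMem ha] at h
      omega
  · rintro ⟨j, hj, h⟩
    refine ⟨j + 1, by omega, ?_⟩
    rw [Icc_add_one_eq_insert, inter_insert_of_notMem ha]
    omega

lemma reachesAbove_succ_insert_iff {a n ℓ : ℕ} {F : Finset ℕ} (ha : a + 1 ∉ F) :
    ReachesAbove a (n + 1) (ℓ + 1) (insert (a + 1) F) ↔ ReachesAbove (a + 1) n ℓ F := by
  have hcard : ∀ j, #(insert (a + 1) F ∩ Icc (a + 1) (a + (j + 1))) =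
      #(F ∩ Icc (a + 1 + 1) (a + 1 + j)) + 1 := fun j => by
    rw [Icc_add_one_eq_insert, inter_insert_of_mem (mem_insert_self _ _), insert_inter_of_notMem,
      card_insert_of_notMem]
    · exact fun h => ha (mem_inter.1 h).1
    · simp
  constructor
  · rintro ⟨_ | j, hj, h⟩
    · simp at h
    · exact ⟨j, by omega, by rw [hcard] at h; omega⟩
  · rintro ⟨j, hj, h⟩
    exact ⟨j + 1, by omega, by rw [hcard]; omega⟩

lemma mu_reachFamily_succ (a n ℓ : ℕ) :
    mu (n + 1) p (reachFamily a (n + 1) (ℓ + 1)) =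
      (1 - p) * mu n p (reachFamily (a + 1) n (ℓ + 2)) + p * mu n p (reachFamily (a + 1) n ℓ) := by
  have ha : a + 1 ∉ Icc (a + 1 + 1) (a + 1 + n) := by simp
  simp only [mu, reachFamily, sum_filter, mul_sum]
  rw [Icc_add_one_eq_insert, sum_powerset_insert ha]
  congr 1 <;> refine sum_congr rfl fun F hF => ?_
  · have hF : F ⊆ Icc (a + 1 + 1) (a + 1 + n) := mem_powerset.1 hF
    have hcard : #F ≤ n := by simpa using card_le_card hF
    rw [if_congr (reachesAbove_succ_iff fun h => ha (hF h)) rfl rfl,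
      show n + 1 - #F = n - #F + 1 by omega]
    split_ifs <;> ring
  · have hF : F ⊆ Icc (a + 1 + 1) (a + 1 + n) := mem_powerset.1 hF
    rw [if_congr (reachesAbove_succ_insert_iff fun h => ha (hF h)) rfl rfl,
      card_insert_of_notMem fun h => ha (hF h), Nat.add_sub_add_right]
    split_ifs <;> ring

lemma mu_reachFamily_le (hp : 0 ≤ p) (hp1 : p < 1) (a n ℓ : ℕ) :
    mu n p (reachFamily a n ℓ) ≤ (p / (1 - p)) ^ ℓ := by
  have hq : 0 < 1 - p := by linarith
  have hzero : ∀ a n, mu n p (reachFamily a n 0) ≤ (p / (1 - p)) ^ 0 := fun a n =>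
    calc mu n p (reachFamily a n 0) ≤ mu n p (Icc (a + 1) (a + n)).powerset :=
          mu_mono n hp hp1.le (filter_subset _ _)
      _ = 1 := by simpa using mu_powerset (p := p) (Icc (a + 1) (a + n))
      _ = _ := (pow_zero _).symm
  induction n generalizing a ℓ with
  | zero =>
    rcases ℓ with _ | ℓ
    · exact hzero a 0
    · have : reachFamily a 0 (ℓ + 1) = ∅ := by simp [reachFamily, ReachesAbove]
      rw [this, mu, sum_empty]
      positivity
  | succ n ih =>
    rcases ℓ with _ | ℓ
    · exact hzero a (n + 1)
    · rw [mu_reachFamily_succ]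
      calc (1 - p) * mu n p (reachFamily (a + 1) n (ℓ + 2)) + p * mu n p (reachFamily (a + 1) n ℓ)
          ≤ (1 - p) * (p / (1 - p)) ^ (ℓ + 2) + p * (p / (1 - p)) ^ ℓ := by
            gcongr <;> exact ih _ _
        _ = (p / (1 - p)) ^ (ℓ + 1) := by
            have hα : p / (1 - p) * (1 - p) = p := div_mul_cancel₀ p hq.ne'
            linear_combination ((p / (1 - p)) ^ (ℓ + 1) - (p / (1 - p)) ^ ℓ) * hα

noncomputable def stayBelow (a L : ℕ) : Finset (Finset ℕ) :=
  (Icc (a + 1) (a + L)).powerset \ reachFamily a L 1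

lemma one_sub_le_mu_stayBelow (hp : 0 ≤ p) (hp1 : p < 1) (a L : ℕ) :
    1 - p / (1 - p) ≤ mu L p (stayBelow a L) := by
  have htotal : mu L p (stayBelow a L) + mu L p (reachFamily a L 1) = 1 := by
    have hall := mu_powerset (p := p) (Icc (a + 1) (a + L))
    rwa [Nat.card_Icc, show a + L + 1 - (a + 1) = L by omega, mu,
      ← sum_sdiff (filter_subset (ReachesAbove a L 1) _)] at hall
  have := mu_reachFamily_le hp hp1 a L 1
  rw [pow_one] at this
  linarith

lemma two_mul_card_inter_Icc_le_of_mem_stayBelow {a L : ℕ} {R : Finset ℕ}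
    (hR : R ∈ stayBelow a L) {m : ℕ} (hm : m ≤ a + L) : 2 * #(R ∩ Icc 1 m) ≤ m - a := by
  obtain ⟨hRsub, hRa⟩ := mem_sdiff.1 hR
  have hR' : ∀ y ∈ R, a + 1 ≤ y := fun y hy => (mem_Icc.1 (mem_powerset.1 hRsub hy)).1
  rcases le_or_gt m a with hma | ham
  · have : R ∩ Icc 1 m = ∅ := disjoint_iff_inter_eq_empty.1 <| disjoint_left.2 fun y hy hy' => by
      have := hR' y hy
      have := mem_Icc.1 hy'
      omega
    simp [this]
  · have hRm : R ∩ Icc 1 m = R ∩ Icc (a + 1) (a + (m - a)) := by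
      ext y
      simp only [mem_inter, mem_Icc]
      constructor <;> rintro ⟨hy, -, hym⟩ <;> exact ⟨hy, by have := hR' y hy; omega⟩
    have : ¬ m - a + 1 ≤ 2 * #(R ∩ Icc (a + 1) (a + (m - a))) := fun h =>
      hRa (mem_filter.2 ⟨hRsub, m - a, by omega, h⟩)
    rw [hRm]
    omega

lemma mem_reachFamily_zero {n ℓ : ℕ} {F : Finset ℕ} (hF : F ⊆ Icc 1 n) (h : Reaches n ℓ F) :
    F ∈ reachFamily 0 n ℓ := by
  simpa [reachFamily, ReachesAbove] using ⟨hF, h⟩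

lemma insert_erase_mem_of_shifted {n : ℕ} {𝓐 : Finset (Finset ℕ)} (hS : Shifted n 𝓐)
    {F : Finset ℕ} (hF : F ∈ 𝓐) {i j : ℕ} (hi : 1 ≤ i) (hij : i < j) (hj : j ≤ n)
    (hjF : j ∈ F) (hiF : i ∉ F) : insert i (F.erase j) ∈ 𝓐 := by
  by_contra h
  have : shiftSet i j 𝓐 F ∈ shiftFam i j 𝓐 := mem_image_of_mem _ hF
  rw [hS i j hi hij hj, shiftSet, if_pos ⟨hjF, hiF, h⟩] at this
  exact h this

lemma card_inter_Icc_add_card_inter_Ioc (F : Finset ℕ) {m x : ℕ} (h : m ≤ x) :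
    #(F ∩ Icc 1 m) + #(F ∩ Ioc m x) = #(F ∩ Icc 1 x) := by
  rw [← card_union_of_disjoint, ← inter_union_distrib_left]
  · congr 2
    ext y
    simp only [mem_union, mem_Icc, mem_Ioc]
    omega
  · exact disjoint_left.2 fun y hy hy' => by
      simp only [mem_inter, mem_Icc, mem_Ioc] at hy hy'
      omega

lemma card_inter_Icc_le_add (F : Finset ℕ) (m m' : ℕ) :
    #(F ∩ Icc 1 m) ≤ #(F ∩ Icc 1 m') + (m - m') := by
  rcases le_total m m' with h | h
  · have := card_le_card (inter_subset_inter_left (Icc_subset_Icc_right h) : F ∩ Icc 1 m ⊆ _)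
    omega
  · have hIoc : #(F ∩ Ioc m' m) ≤ m - m' := by
      simpa using card_le_card (inter_subset_right : F ∩ Ioc m' m ⊆ _)
    have := card_inter_Icc_add_card_inter_Ioc F h
    omega

lemma card_inter_Icc_one_le (F : Finset ℕ) (m : ℕ) : #(F ∩ Icc 1 m) ≤ m := by
  simpa using card_le_card (inter_subset_right : F ∩ Icc 1 m ⊆ _)

lemma card_inter_Icc_insert_erase {A : Finset ℕ} {i x : ℕ} (hi : 1 ≤ i) (hx : 1 ≤ x)
    (hiA : i ∉ A) (hxA : x ∈ A) (m : ℕ) :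
    #(insert i (A.erase x) ∩ Icc 1 m) + (if x ≤ m then 1 else 0) =
      #(A ∩ Icc 1 m) + (if i ≤ m then 1 else 0) := by
  have hinsert : #(insert i (A.erase x) ∩ Icc 1 m) =
      #((A ∩ Icc 1 m).erase x) + if i ≤ m then 1 else 0 := by
    have hi' : i ∉ (A ∩ Icc 1 m).erase x := fun h => hiA (mem_inter.1 (mem_of_mem_erase h)).1
    split_ifs with him
    · rw [insert_inter_of_mem (by simp [hi, him]), erase_inter, card_insert_of_notMem hi']
    · rw [insert_inter_of_notMem (by simp [him]), erase_inter, add_zero]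
  have herase : #((A ∩ Icc 1 m).erase x) + (if x ≤ m then 1 else 0) = #(A ∩ Icc 1 m) := by
    split_ifs with hxm
    · exact card_erase_add_one (by simp [hxA, hx, hxm])
    · rw [erase_eq_of_notMem (by simp [hxm]), add_zero]
  omega

def PrefixLE (n : ℕ) (A H : Finset ℕ) : Prop :=
  ∀ m ≤ n, #(A ∩ Icc 1 m) ≤ #(H ∩ Icc 1 m)

lemma prefixLE_insert_erase {n : ℕ} {A H : Finset ℕ} (hAH : PrefixLE n A H) {i x : ℕ}
    (hiA : i ∉ A) (hi : 1 ≤ i) (hix : i < x) (hxn : x ≤ n) (hxA : x ∈ A)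
    (hxH : x ∉ H) (hgap : ∀ y ∈ H, i < y → y < x → y ∈ A) :
    PrefixLE n (insert i (A.erase x)) H := by
  intro m hm
  have hcount := card_inter_Icc_insert_erase hi (by omega) hiA hxA m
  by_cases hmid : i ≤ m ∧ m < x
  · -- `H ⊆ A` on `(m, x)` while `x ∈ A \ H`, so `H` is strictly ahead of `A` at `m`
    have hlt : #(H ∩ Ioc m x) < #(A ∩ Ioc m x) := by
      refine card_lt_card ⟨fun y hy => ?_, fun h => hxH (mem_inter.1 (h ?_)).1⟩
      · simp only [mem_inter, mem_Ioc] at hy ⊢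
        rcases eq_or_lt_of_le hy.2.2 with rfl | hyx
        · exact absurd hy.1 hxH
        · exact ⟨hgap y hy.1 (by omega) hyx, hy.2⟩
      · simp [hxA]
        omega
    have := card_inter_Icc_add_card_inter_Ioc A hmid.2.le
    have := card_inter_Icc_add_card_inter_Ioc H hmid.2.le
    have := hAH x hxn
    simp only [hmid.1, if_true, if_neg (not_le.2 hmid.2)] at hcount
    omega
  · have := hAH m hm
    split_ifs at hcount <;> omega

lemma exists_shift_prefixLE {n : ℕ} {A H : Finset ℕ} (hAH : PrefixLE n A H) {x : ℕ}
    (hx : x ∈ Icc 1 n) (hxA : x ∈ A) (hxH : x ∉ H) :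
    ∃ i ∈ H, i ∉ A ∧ 1 ≤ i ∧ i < x ∧ PrefixLE n (insert i (A.erase x)) H := by
  obtain ⟨hx1, hxn⟩ := mem_Icc.1 hx
  set K := (H \ A) ∩ Icc 1 (x - 1)
  have hK : K.Nonempty := by
    by_contra hK
    have hsub : H ∩ Icc 1 (x - 1) ⊆ A ∩ Icc 1 (x - 1) := fun y hy => by
      rw [mem_inter] at hy ⊢
      by_contra hyA
      exact hK ⟨y, mem_inter.2 ⟨mem_sdiff.2 ⟨hy.1, fun h => hyA ⟨h, hy.2⟩⟩, hy.2⟩⟩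
    have hIoc : Ioc (x - 1) x = {x} := by ext; simp; omega
    have hAx := card_inter_Icc_add_card_inter_Ioc A (Nat.sub_le x 1)
    have hHx := card_inter_Icc_add_card_inter_Ioc H (Nat.sub_le x 1)
    rw [hIoc, inter_singleton_of_mem hxA, card_singleton] at hAx
    rw [hIoc, inter_singleton_of_notMem hxH, card_empty] at hHx
    have := card_le_card hsub
    have := hAH x hxn
    omega
  obtain ⟨i, hiK, himax⟩ : ∃ i ∈ K, ∀ y ∈ K, y ≤ i :=
    ⟨K.max' hK, K.max'_mem hK, fun y hy => K.le_max' y hy⟩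
  simp only [K, mem_inter, mem_sdiff, mem_Icc] at hiK himax
  obtain ⟨⟨hiH, hiA⟩, hi1, hix⟩ := hiK
  refine ⟨i, hiH, hiA, hi1, by omega,
    prefixLE_insert_erase hAH hiA hi1 (by omega) hxn hxA hxH fun y hyH hiy hyx => ?_⟩
  by_contra hyA
  have := himax y ⟨⟨hyH, hyA⟩, by omega, by omega⟩
  omega

theorem mem_of_prefixLE {n : ℕ} {𝓐 : Finset (Finset ℕ)} (hS : Shifted n 𝓐) (hM : InclMax n 𝓐)
    {A H : Finset ℕ} (hA : A ∈ 𝓐) (hAn : A ⊆ Icc 1 n) (hH : H ⊆ Icc 1 n)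
    (hAH : PrefixLE n A H) : H ∈ 𝓐 := by
  induction h : #(A \ H) generalizing A with
  | zero => exact hM A hA H (sdiff_eq_empty_iff_subset.1 (card_eq_zero.1 h)) hH
  | succ k ih =>
    obtain ⟨x, hx⟩ : (A \ H).Nonempty := card_pos.1 (by omega)
    obtain ⟨hxA, hxH⟩ := mem_sdiff.1 hx
    obtain ⟨i, hiH, hiA, hi1, hix, hshift⟩ := exists_shift_prefixLE hAH (hAn hxA) hxA hxH
    have hdiff : insert i (A.erase x) \ H = (A \ H).erase x := by
      ext y
      simp only [mem_sdiff, mem_insert, mem_erase]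
      constructor
      · rintro ⟨rfl | ⟨hyx, hyA⟩, hyH⟩
        · exact absurd hiH hyH
        · exact ⟨hyx, hyA, hyH⟩
      · rintro ⟨hyx, hyA, hyH⟩
        exact ⟨Or.inr ⟨hyx, hyA⟩, hyH⟩
    refine ih (insert_erase_mem_of_shifted hS hA hi1 hix (mem_Icc.1 (hAn hxA)).2 hxA hiA)
      (insert_subset (hH hiH) ((erase_subset _ _).trans hAn)) hshift ?_
    rw [hdiff, card_erase_of_mem hx, h, Nat.add_sub_cancel]

lemma card_Icc_inter_Icc_one (a b m : ℕ) :
    #(Icc a b ∩ Icc 1 m) = min b m + 1 - max a 1 := by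
  rw [show Icc a b ∩ Icc 1 m = Icc (max a 1) (min b m) by ext; simp; omega, Nat.card_Icc]

/- The decidability instance is left arbitrary because the filter in `DD` is elaborated with the
classical one. -/
lemma card_progression_inter_Icc (n c m : ℕ) (hm : m ≤ n)
    {_ : DecidablePred fun x => ∃ k ∈ Icc 1 n, x = c + 2 * k} :
    #((Icc 1 n).filter (fun x => ∃ k ∈ Icc 1 n, x = c + 2 * k) ∩ Icc 1 m) = (m - c) / 2 := by
  have : (Icc 1 n).filter (fun x => ∃ k ∈ Icc 1 n, x = c + 2 * k) ∩ Icc 1 m =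
      (Icc 1 ((m - c) / 2)).image (fun k => c + 2 * k) := by
    ext x
    simp only [mem_inter, mem_filter, mem_Icc, mem_image]
    constructor
    · rintro ⟨⟨-, k, hk, rfl⟩, -, hxm⟩
      exact ⟨k, ⟨hk.1, by omega⟩, rfl⟩
    · rintro ⟨k, hk, rfl⟩
      exact ⟨⟨by omega, k, by omega, rfl⟩, by omega, by omega⟩
  rw [this, card_image_of_injective _ fun k k' h => by omega, Nat.card_Icc, Nat.add_sub_cancel]

lemma card_DD_inter_Icc {n t s i m : ℕ} (ht : 1 ≤ t) (hm : m ≤ n) :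
    #(DD n t s i ∩ Icc 1 m) =
      min (t - 1) m + (min (t + 2 * s) m + 1 - (t + s)) + (m - (t + 2 * s + i)) / 2 := by
  rw [DD, union_inter_distrib_right, union_inter_distrib_right, card_union_of_disjoint,
    card_union_of_disjoint, card_progression_inter_Icc n _ m hm, card_Icc_inter_Icc_one,
    card_Icc_inter_Icc_one]
  · omega
  · exact disjoint_left.2 fun y hy hy' => by simp only [mem_inter, mem_Icc] at hy hy'; omega
  · refine disjoint_left.2 fun y hy hy' => ?_
    simp only [mem_union, mem_inter, mem_filter, mem_Icc] at hy hy'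
    omega

lemma DD_subset {n t s : ℕ} (ht : 1 ≤ t) (h : t + 2 * s ≤ n) (i : ℕ) :
    DD n t s i ⊆ Icc 1 n :=
  union_subset (union_subset (Icc_subset_Icc le_rfl (by omega)) (Icc_subset_Icc (by omega) h))
    fun x hx => by simp_all

lemma exists_inter_card_le_and_prefix_ge {n : ℕ} (B : Finset ℕ) (k : ℕ) :
    ∃ H ⊆ Icc 1 n, #(H ∩ B) ≤ k ∧
      ∀ m ≤ n, m - #(B ∩ Icc 1 m) + min k #(B ∩ Icc 1 m) ≤ #(H ∩ Icc 1 m) := by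
  set r := Nat.findGreatest (fun r => #(B ∩ Icc 1 r) ≤ k) n
  have hr : #(B ∩ Icc 1 r) ≤ k := Nat.findGreatest_spec (P := fun r => #(B ∩ Icc 1 r) ≤ k)
    (Nat.zero_le n) (by simp)
  refine ⟨(Icc 1 n \ B) ∪ (B ∩ Icc 1 r), union_subset sdiff_subset ?_, ?_, fun m hm => ?_⟩
  · exact inter_subset_right.trans (Icc_subset_Icc_right (Nat.findGreatest_le n))
  · rwa [union_inter_distrib_right, sdiff_inter_self, empty_union, inter_right_comm,
      inter_self]
  have hsplit : (Icc 1 n \ B ∪ B ∩ Icc 1 r) ∩ Icc 1 m = (Icc 1 m \ B) ∪ (B ∩ Icc 1 (min r m)) := by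
    ext y
    simp only [mem_inter, mem_union, mem_sdiff, mem_Icc]
    by_cases hy : y ∈ B <;> simp only [hy, true_and, false_and, not_true, not_false_eq_true,
      and_true, and_false, or_false, false_or] <;> omega
  have hdisj : Disjoint (Icc 1 m \ B) (B ∩ Icc 1 (min r m)) :=
    disjoint_left.2 fun y hy hy' => (mem_sdiff.1 hy).2 (mem_inter.1 hy').1
  have hcompl : #(Icc 1 m \ B) = m - #(B ∩ Icc 1 m) := by
    rw [card_sdiff, inter_comm, Nat.card_Icc, Nat.add_sub_cancel]
  have hmin : min k #(B ∩ Icc 1 m) ≤ #(B ∩ Icc 1 (min r m)) := by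
    rcases le_total m r with hmr | hrm
    · rw [min_eq_right hmr]
      exact min_le_right _ _
    rw [min_eq_left hrm]
    rcases eq_or_lt_of_le hrm with rfl | hrm
    · exact min_le_right _ _
    have hnext : ¬ #(B ∩ Icc 1 (r + 1)) ≤ k :=
      Nat.findGreatest_is_greatest (P := fun r => #(B ∩ Icc 1 r) ≤ k) (Nat.lt_succ_self r)
        (by omega)
    have := card_inter_Icc_le_add B (r + 1) r
    omega
  rw [hsplit, card_union_of_disjoint hdisj, hcompl]
  omega

lemma reaches_of_not_mem_FF {n t s i : ℕ} (ht : 1 ≤ t) (hn : t + 2 * s ≤ n)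
    {𝓐 𝓑 : Finset (Finset ℕ)} (hS : Shifted n 𝓐) (hM : InclMax n 𝓐)
    (hcross : CrossIntersecting t 𝓐 𝓑) (hD : DD n t s i ∈ 𝓐)
    {B : Finset ℕ} (hB : B ∈ 𝓑) (hBn : B ⊆ Icc 1 n) (hBF : B ∉ FF n t s) :
    Reaches n (t + i) B := by
  by_contra hBR
  simp only [Reaches, not_exists, not_and, not_le] at hBR
  have hBt : #(B ∩ Icc 1 (t + 2 * s)) < t + s := by
    by_contra h
    exact hBF (mem_filter.2 ⟨mem_powerset.2 hBn, by omega⟩)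
  obtain ⟨H, hHn, hHB, hH⟩ := exists_inter_card_le_and_prefix_ge (n := n) B (t - 1)
  have hDH : PrefixLE n (DD n t s i) H := fun m hm => by
    have := card_DD_inter_Icc (s := s) (i := i) ht hm
    have := card_inter_Icc_le_add B m (t + 2 * s)
    have := card_inter_Icc_one_le B m
    have := hBR m hm
    have := hH m hm
    omega
  have := hcross H (mem_of_prefixLE hS hM hD (DD_subset ht hn i) hHn hDH) B hB
  omega

lemma prefixLE_union_DD {n t s i : ℕ} (ht : 1 ≤ t) {T R : Finset ℕ} (hT : #T = t - 1)
    (hR : ∀ m ≤ n, 2 * #(R ∩ Icc 1 m) ≤ m - (t + 2 * s + i + 1)) :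
    PrefixLE n (T ∪ Icc (t + s) (t + 2 * s) ∪ R) (DD n t s (i + 1)) := by
  intro m hm
  have : #(T ∩ Icc 1 m) ≤ t - 1 := hT ▸ card_le_card inter_subset_left
  have := card_inter_Icc_one_le T m
  have := card_Icc_inter_Icc_one (t + s) (t + 2 * s) m
  have := hR m hm
  have := card_DD_inter_Icc (s := s) (i := i + 1) ht hm
  have := card_union_le (T ∩ Icc 1 m) (Icc (t + s) (t + 2 * s) ∩ Icc 1 m)
  have := card_union_le ((T ∩ Icc 1 m) ∪ (Icc (t + s) (t + 2 * s) ∩ Icc 1 m)) (R ∩ Icc 1 m)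
  rw [union_inter_distrib_right, union_inter_distrib_right]
  omega

/-- The sets `T ∪ [t+s, t+2s] ∪ R` with `T` a `(t-1)`-subset of `[t+s-1]` and `R ⊆ (a, n]` a walk
that never reaches height `1`, where `a = t+2s+i+1`. -/
noncomputable def lowerFamily (n t s i : ℕ) : Finset (Finset ℕ) :=
  ((((Icc 1 (t + s - 1)).powersetCard (t - 1) ×ˢ {Icc (t + s) (t + 2 * s)}).image
      fun TM => TM.1 ∪ TM.2) ×ˢ stayBelow (t + 2 * s + i + 1) (n - (t + 2 * s + i + 1))).image
    fun TR => TR.1 ∪ TR.2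

lemma mu_lowerFamily {n t s i : ℕ} (ht : 1 ≤ t) (hn : t + 2 * s + i + 1 ≤ n) :
    mu n p (lowerFamily n t s i) =
      (t + s - 1).choose s * p ^ (t + s) * (1 - p) ^ (s + i + 1) *
        mu (n - (t + 2 * s + i + 1)) p
          (stayBelow (t + 2 * s + i + 1) (n - (t + 2 * s + i + 1))) := by
  set a := t + 2 * s + i + 1
  set X₁ := Icc 1 (t + s - 1)
  set X₂ := Icc (t + s) a
  set Y := Icc (a + 1) (a + (n - a))
  set M := Icc (t + s) (t + 2 * s)
  have hX : Disjoint X₁ X₂ := disjoint_left.2 fun y hy hy' => by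
    simp only [X₁, X₂, mem_Icc] at hy hy'
    omega
  have hXY : Disjoint (X₁ ∪ X₂) Y := disjoint_left.2 fun y hy hy' => by
    simp only [X₁, X₂, Y, mem_union, mem_Icc] at hy hy'
    omega
  have hM : M ⊆ X₂ := Icc_subset_Icc le_rfl (by omega)
  have hinner : ((X₁.powersetCard (t - 1) ×ˢ {M}).image fun TM => TM.1 ∪ TM.2) ⊆
      (X₁ ∪ X₂).powerset := by
    simp only [image_subset_iff, mem_product, mem_singleton, mem_powerset, mem_powersetCard]
    rintro ⟨T, M'⟩ ⟨⟨hT, -⟩, rfl⟩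
    exact union_subset_union hT hM
  have hX₁ : #X₁ = (t - 1) + s := by simp only [X₁, Nat.card_Icc]; omega
  have hX₂ : #X₂ = (s + 1) + (i + 1) := by simp only [X₂, Nat.card_Icc]; omega
  have hMcard : #M = s + 1 := by simp only [M, Nat.card_Icc]; omega
  have hY : #Y = n - a := by simp only [Y, Nat.card_Icc]; omega
  have hweight := mu_image_union (p := p) (𝓡 := stayBelow a (n - a)) hXY hinner sdiff_subset
  rw [card_union_of_disjoint hX, mu_image_union hX
      (fun T hT => mem_powerset.2 (mem_powersetCard.1 hT).1)
      (singleton_subset_iff.2 (mem_powerset.2 hM)), mu_powersetCard,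
    show mu #X₂ p {M} = p ^ #M * (1 - p) ^ (#X₂ - #M) from sum_singleton _ _,
    hX₁, hX₂, hMcard, hY, Nat.choose_symm_add, Nat.add_sub_cancel_left, Nat.add_sub_cancel_left,
    show t - 1 + s + (s + 1 + (i + 1)) + (n - a) = n by omega] at hweight
  rw [lowerFamily, hweight, show t + s - 1 = (t - 1) + s by omega,
    show t + s = (t - 1) + (s + 1) by omega, show s + i + 1 = s + (i + 1) by omega]
  ring

lemma lowerFamily_subset_FF_sdiff {n t s i : ℕ} (ht : 1 ≤ t) (hn : t + 2 * s + i + 1 ≤ n)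
    {𝓐 : Finset (Finset ℕ)} (hS : Shifted n 𝓐) (hM : InclMax n 𝓐)
    (hD : DD n t s (i + 1) ∉ 𝓐) : lowerFamily n t s i ⊆ FF n t s \ 𝓐 := by
  intro E hE
  simp only [lowerFamily, mem_image, mem_product, mem_singleton, mem_powersetCard,
    Prod.exists] at hE
  obtain ⟨_, R, ⟨⟨T, _, ⟨⟨hT, hTcard⟩, rfl⟩, rfl⟩, hR⟩, rfl⟩ := hE
  have hRn : R ⊆ Icc 1 n :=
    (mem_powerset.1 (mem_sdiff.1 hR).1).trans (Icc_subset_Icc (by omega) (by omega))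
  have hEn : T ∪ Icc (t + s) (t + 2 * s) ∪ R ⊆ Icc 1 n :=
    union_subset (union_subset (hT.trans (Icc_subset_Icc le_rfl (by omega)))
      (Icc_subset_Icc (by omega) (by omega))) hRn
  have hTM : t + s ≤ #((T ∪ Icc (t + s) (t + 2 * s)) ∩ Icc 1 (t + 2 * s)) := by
    rw [inter_eq_left.2 (union_subset (hT.trans (Icc_subset_Icc le_rfl (by omega)))
      (Icc_subset_Icc (by omega) le_rfl)), card_union_of_disjoint, hTcard, Nat.card_Icc]
    · omega
    · exact disjoint_left.2 fun y hy hy' => by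
        have := mem_Icc.1 (hT hy)
        have := mem_Icc.1 hy'
        omega
  have hFF : T ∪ Icc (t + s) (t + 2 * s) ∪ R ∈ FF n t s :=
    mem_filter.2 ⟨mem_powerset.2 hEn,
      hTM.trans (card_le_card (inter_subset_inter_right subset_union_left))⟩
  have hprefix := prefixLE_union_DD (n := n) (s := s) (i := i) ht hTcard fun m hm =>
    two_mul_card_inter_Icc_le_of_mem_stayBelow hR (by omega)
  exact mem_sdiff.2 ⟨hFF, fun hE => hD (mem_of_prefixLE hS hM hE hEn
    (DD_subset ht (by omega) _) hprefix)⟩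

lemma le_mu_lowerFamily (hp : 0 ≤ p) (hp1 : p < 1) {n t s i : ℕ} (ht : 1 ≤ t)
    (hn : t + 2 * s + i + 1 ≤ n) :
    (t + s - 1).choose s * p ^ (t + s) * (1 - p) ^ (s + i + 1) * (1 - p / (1 - p)) ≤
      mu n p (lowerFamily n t s i) := by
  have hq : 0 ≤ 1 - p := by linarith
  rw [mu_lowerFamily ht hn]
  gcongr
  exact one_sub_le_mu_stayBelow hp hp1 _ _

end

theorem statement_6_general (n t s : ℕ) (ht : 2 ≤ t)
    (p : ℝ) (hp : 0 < p) (hp' : p ≤ 1 / 2)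
    (𝓐 𝓑 : Finset (Finset ℕ))
    (hB : 𝓑 ⊆ (Finset.Icc 1 n).powerset)
    (hSA : Shifted n 𝓐)
    (hMA : InclMax n 𝓐)
    (hcross : CrossIntersecting t 𝓐 𝓑)
    (I : ℕ)
    (hI : IsGreatest {i : ℕ | 1 ≤ i ∧ i ≤ n - t - 2 * s - 1 ∧ DD n t s i ∈ 𝓐} I)
    (hImax : I ≠ n - t - 2 * s - 1) :
    (Nat.choose (t + s - 1) s : ℝ) * p ^ (t + s) * (1 - p) ^ (s + I + 1) *
        (1 - p / (1 - p)) ≤ mu n p (FF n t s \ 𝓐) ∧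
      mu n p (𝓑 \ FF n t s) ≤ (p / (1 - p)) ^ (t + I) := by
  obtain ⟨⟨hI1, hIle, hDI⟩, hIub⟩ := hI
  have ht1 : 1 ≤ t := by omega
  have hn : t + 2 * s + I + 1 ≤ n := by omega
  have hp0 : 0 ≤ p := hp.le
  have hp1 : p < 1 := by linarith
  have hDnext : DD n t s (I + 1) ∉ 𝓐 := fun h =>
    absurd (hIub ⟨by omega, by omega, h⟩) (by omega)
  refine ⟨(le_mu_lowerFamily hp0 hp1 ht1 hn).trans
    (mu_mono n hp0 hp1.le (lowerFamily_subset_FF_sdiff ht1 hn hSA hMA hDnext)), ?_⟩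
  calc mu n p (𝓑 \ FF n t s) ≤ mu n p (reachFamily 0 n (t + I)) :=
        mu_mono n hp0 hp1.le fun B hB' => by
          obtain ⟨hB𝓑, hBF⟩ := mem_sdiff.1 hB'
          have hBn := mem_powerset.1 (hB hB𝓑)
          exact mem_reachFamily_zero hBn
            (reaches_of_not_mem_FF ht1 (by omega) hSA hMA hcross hDI hB𝓑 hBn hBF)
    _ ≤ _ := mu_reachFamily_le hp0 hp1 0 n (t + I)

/-- the two weight estimates of Claim `B-F` in the extremal case. -/
theorem statement_6 (n t s : ℕ) (ht : 2 ≤ t) (hn : t + 2 * s + 3 ≤ n)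
    (p : ℝ) (hp : 0 < p) (hp' : p ≤ 1 / 2)
    (𝓐 𝓑 : Finset (Finset ℕ))
    (hA : 𝓐 ⊆ (Finset.Icc 1 n).powerset) (hB : 𝓑 ⊆ (Finset.Icc 1 n).powerset)
    (hSA : Shifted n 𝓐) (hSB : Shifted n 𝓑)
    (hMA : InclMax n 𝓐) (hMB : InclMax n 𝓑)
    (hcross : CrossIntersecting t 𝓐 𝓑)
    (hD1 : DD n t s 1 ∈ 𝓐)
    (I : ℕ)
    (hI : IsGreatest {i : ℕ | 1 ≤ i ∧ i ≤ n - t - 2 * s - 1 ∧ DD n t s i ∈ 𝓐} I)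
    (hImax : I ≠ n - t - 2 * s - 1) :
    (Nat.choose (t + s - 1) s : ℝ) * p ^ (t + s) * (1 - p) ^ (s + I + 1) *
        (1 - p / (1 - p)) ≤ mu n p (FF n t s \ 𝓐) ∧
      mu n p (𝓑 \ FF n t s) ≤ (p / (1 - p)) ^ (t + I) :=
  statement_6_general n t s ht p hp hp' 𝓐 𝓑 hB hSA hMA hcross I hI hImax
end

section
/- Let t ≥ 2, r ≥ 0 and n ≥ t + 2r be integers, let 1 ≤ i < j ≤ n, and let A, B ⊆ 2^[n] be cross t-intersecting families. If s_{ij}(A) = s_{ij}(B) = F_r^t, then A = B and A is isomorphic to F_r^t. -/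
open Finset

open scoped Classical

/-!
A set `H ∈ F_r^t` missing from `𝓐` must have been created by the shift, so `i ∈ H`, `j ∉ H`
and `H' = (H \ {i}) ∪ {j}` lies in `𝓐` but not in `F_r^t`. This forces `i ≤ t + 2r < j` and
`|H ∩ [t+2r]| = t + r`: `H` is *tight*. Cross `t`-intersection then propagates absence: if a
tight `G` is missing from `𝓐` and a tight `H` meets `G` in exactly `t` points, then `G' ∈ 𝓐`
meets `H` in `t - 1` points, so `H ∉ 𝓑`, and symmetrically. Since `t ≥ 2`, any two tight sets
are joined by walks of even length in this graph, so no tight set lies in `𝓐` or `𝓑`, and both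
families are then exactly the image of `F_r^t` under the transposition `(i j)`. If instead
`F_r^t ⊆ 𝓐, 𝓑`, the shift fixes both families.
-/

namespace Frankl

section Swap

variable {α : Type*} [DecidableEq α] {i j : α}

lemma swap_apply_mem {s : Finset α} {x : α} (hi : i ∈ s) (hj : j ∈ s) (hx : x ∈ s) :
    Equiv.swap i j x ∈ s := by
  rw [Equiv.swap_apply_def]
  split_ifs
  exacts [hj, hi, hx]

lemma image_swap_subset {K s : Finset α} (hi : i ∈ s) (hj : j ∈ s) (hK : K ⊆ s) :
    K.image (Equiv.swap i j) ⊆ s :=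
  Finset.image_subset_iff.2 fun _ hx => swap_apply_mem hi hj (hK hx)

lemma mem_image_swap_iff {K : Finset α} {x : α} :
    x ∈ K.image (Equiv.swap i j) ↔ Equiv.swap i j x ∈ K := by
  constructor
  · intro h
    obtain ⟨y, hy, rfl⟩ := Finset.mem_image.1 h
    rwa [Equiv.swap_apply_self]
  · exact fun h => Finset.mem_image.2 ⟨_, h, Equiv.swap_apply_self i j x⟩

lemma image_swap_image_swap (K : Finset α) :
    (K.image (Equiv.swap i j)).image (Equiv.swap i j) = K := by
  simp [Finset.image_image, Function.comp_def]

lemma image_swap_of_iff {K : Finset α} (h : i ∈ K ↔ j ∈ K) :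
    K.image (Equiv.swap i j) = K := by
  ext x
  rw [mem_image_swap_iff, Equiv.swap_apply_def]
  split_ifs with hxi hxj
  · subst hxi; exact h.symm
  · subst hxj; exact h
  · rfl

lemma image_swap_eq_insert_erase {K : Finset α} (hi : i ∈ K) (hj : j ∉ K) :
    K.image (Equiv.swap i j) = insert j (K.erase i) := by
  ext x
  simp only [Finset.mem_image, Finset.mem_insert, Finset.mem_erase, Equiv.swap_apply_def]
  grind

lemma mem_image_image_swap_iff {𝓕 : Finset (Finset α)} {K : Finset α} :
    K ∈ 𝓕.image (fun G => G.image (Equiv.swap i j)) ↔ K.image (Equiv.swap i j) ∈ 𝓕 := by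
  constructor
  · intro h
    obtain ⟨G, hG, rfl⟩ := Finset.mem_image.1 h
    rwa [image_swap_image_swap]
  · exact fun h => Finset.mem_image.2 ⟨_, h, image_swap_image_swap K⟩

lemma card_image_swap_inter {K C : Finset α} (hi : i ∈ K) (hj : j ∉ K) :
    (K.image (Equiv.swap i j) ∩ C).card + (if i ∈ C then 1 else 0) =
      (K ∩ C).card + (if j ∈ C then 1 else 0) := by
  rw [image_swap_eq_insert_erase hi hj]
  by_cases hiC : i ∈ C <;> by_cases hjC : j ∈ C <;>
    simp [hiC, hjC, Finset.insert_inter_of_mem, Finset.insert_inter_of_notMem, Finset.erase_inter,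
      hi, hj, Finset.erase_eq_of_notMem]
  all_goals have := Finset.card_pos.2 ⟨i, Finset.mem_inter.2 ⟨hi, hiC⟩⟩; omega

end Swap

section Shift

variable {i j : ℕ} {𝓐 𝓖 : Finset (Finset ℕ)}

lemma insert_erase_eq_image_swap {A : Finset ℕ} (hj : j ∈ A) (hi : i ∉ A) :
    insert i (A.erase j) = A.image (Equiv.swap i j) := by
  rw [Equiv.swap_comm, image_swap_eq_insert_erase hj hi]

lemma image_swap_mem_of_mem_shiftFam (hs : shiftFam i j 𝓐 = 𝓖) {H : Finset ℕ}
    (hH𝓖 : H ∈ 𝓖) (hH𝓐 : H ∉ 𝓐) :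
    i ∈ H ∧ j ∉ H ∧ H.image (Equiv.swap i j) ∈ 𝓐 ∧ H.image (Equiv.swap i j) ∉ 𝓖 := by
  rw [← hs, shiftFam] at hH𝓖 ⊢
  obtain ⟨A, hA, rfl⟩ := Finset.mem_image.1 hH𝓖
  unfold shiftSet at hH𝓐 ⊢
  split_ifs at hH𝓐 ⊢ with hc
  · obtain ⟨hjA, hiA, hnew⟩ := hc
    rw [insert_erase_eq_image_swap hjA hiA, image_swap_image_swap]
    refine ⟨Finset.mem_image.2 ⟨j, hjA, Equiv.swap_apply_right i j⟩, fun h => ?_, hA,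
      fun hA𝓖 => ?_⟩
    · rw [mem_image_swap_iff, Equiv.swap_apply_right] at h
      exact hiA h
    · obtain ⟨A', hA', hA'A⟩ := Finset.mem_image.1 hA𝓖
      split_ifs at hA'A with hc'
      · exact hiA (hA'A ▸ Finset.mem_insert_self i _)
      · subst hA'A
        exact hc' ⟨hjA, hiA, hnew⟩
  · exact absurd hA hH𝓐

lemma image_swap_mem_shiftFam_of_mem (hs : shiftFam i j 𝓐 = 𝓖) {A : Finset ℕ}
    (hA𝓐 : A ∈ 𝓐) (hA𝓖 : A ∉ 𝓖) :
    A.image (Equiv.swap i j) ∈ 𝓖 ∧ A.image (Equiv.swap i j) ∉ 𝓐 := by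
  have h : shiftSet i j 𝓐 A ∈ 𝓖 := hs ▸ Finset.mem_image_of_mem _ hA𝓐
  unfold shiftSet at h
  split_ifs at h with hc
  · obtain ⟨hjA, hiA, hnew⟩ := hc
    rw [insert_erase_eq_image_swap hjA hiA] at h hnew
    exact ⟨h, hnew⟩
  · exact absurd h hA𝓖

lemma eq_of_subset_of_shiftFam_eq (hs : shiftFam i j 𝓐 = 𝓖) (h𝓖 : 𝓖 ⊆ 𝓐) : 𝓐 = 𝓖 := by
  refine Finset.Subset.antisymm (fun A hA => ?_) h𝓖
  by_contra hA𝓖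
  obtain ⟨hmem, hnot⟩ := image_swap_mem_shiftFam_of_mem hs hA hA𝓖
  exact hnot (h𝓖 hmem)

lemma _root_.CrossIntersecting.symm {t : ℕ} {𝓑 : Finset (Finset ℕ)} (h : CrossIntersecting t 𝓐 𝓑) :
    CrossIntersecting t 𝓑 𝓐 :=
  fun B hB A hA => Finset.inter_comm A B ▸ h A hA B hB

/-- `G` was moved by the shift, and its preimage `σG ∈ 𝓐` meets `H` in only `t - 1` points. -/
lemma not_mem_of_card_inter_eq {t : ℕ} {𝓑 : Finset (Finset ℕ)}
    (hcross : CrossIntersecting t 𝓐 𝓑) (hs : shiftFam i j 𝓐 = 𝓖) {G H : Finset ℕ}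
    (hG𝓖 : G ∈ 𝓖) (hG𝓐 : G ∉ 𝓐) (hiH : i ∈ H) (hjH : j ∉ H) (hGH : (G ∩ H).card = t) :
    H ∉ 𝓑 := by
  obtain ⟨hiG, hjG, hσG, -⟩ := image_swap_mem_of_mem_shiftFam hs hG𝓖 hG𝓐
  intro hH𝓑
  have hcard := card_image_swap_inter (C := H) hiG hjG
  rw [if_pos hiH, if_neg hjH] at hcard
  have := hcross _ hσG _ hH𝓑
  omega

end Shift

section Tight

variable {n t r i j : ℕ}

lemma mem_FF {H : Finset ℕ} :
    H ∈ FF n t r ↔ H ⊆ Finset.Icc 1 n ∧ t + r ≤ (H ∩ Finset.Icc 1 (t + 2 * r)).card := by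
  rw [FF, Finset.mem_filter, Finset.mem_powerset]

/-- When `i ≤ t + 2r < j`, these are exactly the members `H` of `F_r^t` with `i ∈ H`, `j ∉ H`
whose swap `(H \ {i}) ∪ {j}` leaves `F_r^t`. -/
def Tight (n t r i j : ℕ) (G : Finset ℕ) : Prop :=
  G ⊆ Finset.Icc 1 n ∧ i ∈ G ∧ j ∉ G ∧ (G ∩ Finset.Icc 1 (t + 2 * r)).card = t + r

lemma Tight.mem_FF {G : Finset ℕ} (h : Tight n t r i j G) : G ∈ FF n t r :=
  Frankl.mem_FF.2 ⟨h.1, h.2.2.2.ge⟩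

lemma tight_of_image_swap_not_mem_FF (hi : i ∈ Finset.Icc 1 n) (hj : j ∈ Finset.Icc 1 n)
    {H : Finset ℕ} (hH : H ∈ FF n t r) (hiH : i ∈ H) (hjH : j ∉ H)
    (hσH : H.image (Equiv.swap i j) ∉ FF n t r) :
    i ∈ Finset.Icc 1 (t + 2 * r) ∧ j ∉ Finset.Icc 1 (t + 2 * r) ∧ Tight n t r i j H := by
  obtain ⟨hHn, hHC⟩ := mem_FF.1 hH
  have hlt : (H.image (Equiv.swap i j) ∩ Finset.Icc 1 (t + 2 * r)).card < t + r := by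
    by_contra hge
    exact hσH (mem_FF.2 ⟨image_swap_subset hi hj hHn, by omega⟩)
  have hcard := card_image_swap_inter (C := Finset.Icc 1 (t + 2 * r)) hiH hjH
  split_ifs at hcard with hiC hjC hjC <;>
    first | omega | exact ⟨hiC, hjC, hHn, hiH, hjH, by omega⟩

lemma tight_of_mem_FF_not_mem {𝓐 : Finset (Finset ℕ)} (hi : i ∈ Finset.Icc 1 n)
    (hj : j ∈ Finset.Icc 1 n) (hs : shiftFam i j 𝓐 = FF n t r) {H : Finset ℕ}
    (hHF : H ∈ FF n t r) (hH𝓐 : H ∉ 𝓐) :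
    i ∈ Finset.Icc 1 (t + 2 * r) ∧ j ∉ Finset.Icc 1 (t + 2 * r) ∧ Tight n t r i j H := by
  obtain ⟨hiH, hjH, -, hσH⟩ := image_swap_mem_of_mem_shiftFam hs hHF hH𝓐
  exact tight_of_image_swap_not_mem_FF hi hj hHF hiH hjH hσH

lemma image_swap_mem_FF_iff (hi : i ∈ Finset.Icc 1 n) (hj : j ∈ Finset.Icc 1 n)
    (hiC : i ∈ Finset.Icc 1 (t + 2 * r)) (hjC : j ∉ Finset.Icc 1 (t + 2 * r)) (K : Finset ℕ) :
    K.image (Equiv.swap i j) ∈ FF n t r ↔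
      (K ∈ FF n t r ∧ ¬ Tight n t r i j K) ∨ Tight n t r i j (K.image (Equiv.swap i j)) := by
  have hsub : K.image (Equiv.swap i j) ⊆ Finset.Icc 1 n ↔ K ⊆ Finset.Icc 1 n :=
    ⟨fun h => image_swap_image_swap (i := i) (j := j) K ▸ image_swap_subset hi hj h,
      image_swap_subset hi hj⟩
  simp only [mem_FF, Tight, hsub]
  by_cases hiK : i ∈ K <;> by_cases hjK : j ∈ K
  · rw [image_swap_of_iff (iff_of_true hiK hjK)]
    tauto
  · have hcard := card_image_swap_inter (C := Finset.Icc 1 (t + 2 * r)) hiK hjK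
    have hiσ : i ∉ K.image (Equiv.swap i j) := by
      rwa [mem_image_swap_iff, Equiv.swap_apply_left]
    rw [if_pos hiC, if_neg hjC] at hcard
    grind
  · have hiσ : i ∈ K.image (Equiv.swap i j) := by
      rwa [mem_image_swap_iff, Equiv.swap_apply_left]
    have hjσ : j ∉ K.image (Equiv.swap i j) := by
      rwa [mem_image_swap_iff, Equiv.swap_apply_right]
    have hcard := card_image_swap_inter (C := Finset.Icc 1 (t + 2 * r)) hiσ hjσ
    rw [image_swap_image_swap, if_pos hiC, if_neg hjC] at hcard
    grind
  · rw [image_swap_of_iff (iff_of_false hiK hjK)]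
    tauto

end Tight

section Connectivity

variable {n t r i j : ℕ}

def TightLinked (n t r i j : ℕ) (u v : Finset ℕ) : Prop :=
  Tight n t r i j u ∧ Tight n t r i j v ∧
    ∃ w, Tight n t r i j w ∧ (u ∩ w).card = t ∧ (w ∩ v).card = t

lemma card_inter_sdiff_of_subset {u C D : Finset ℕ} (hDu : D ⊆ u) (hDC : D ⊆ C) :
    (u ∩ (C \ D)).card = (u ∩ C).card - D.card := by
  rw [← Finset.inter_sdiff_assoc, Finset.card_sdiff_of_subset (Finset.subset_inter hDu hDC)]

lemma tight_sdiff (hn : t + 2 * r ≤ n) (hiC : i ∈ Finset.Icc 1 (t + 2 * r))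
    (hjC : j ∉ Finset.Icc 1 (t + 2 * r)) {D : Finset ℕ}
    (hD : D ⊆ (Finset.Icc 1 (t + 2 * r)).erase i) (hDr : D.card = r) :
    Tight n t r i j (Finset.Icc 1 (t + 2 * r) \ D) := by
  have hDC : D ⊆ Finset.Icc 1 (t + 2 * r) := hD.trans (Finset.erase_subset _ _)
  refine ⟨Finset.sdiff_subset.trans (Finset.Icc_subset_Icc_right hn),
    Finset.mem_sdiff.2 ⟨hiC, fun h => Finset.notMem_erase i _ (hD h)⟩,
    fun h => hjC (Finset.mem_sdiff.1 h).1, ?_⟩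
  rw [Finset.inter_eq_left.2 Finset.sdiff_subset, Finset.card_sdiff_of_subset hDC, hDr,
    Nat.card_Icc]
  omega

lemma tightLinked_of_card_inter (hn : t + 2 * r ≤ n) (hiC : i ∈ Finset.Icc 1 (t + 2 * r))
    (hjC : j ∉ Finset.Icc 1 (t + 2 * r)) {u v : Finset ℕ} (hu : Tight n t r i j u)
    (hv : Tight n t r i j v) (h : r + 1 ≤ (u ∩ v ∩ Finset.Icc 1 (t + 2 * r)).card) :
    TightLinked n t r i j u v := by
  set C := Finset.Icc 1 (t + 2 * r)
  have hi : i ∈ u ∩ v ∩ C := Finset.mem_inter.2 ⟨Finset.mem_inter.2 ⟨hu.2.1, hv.2.1⟩, hiC⟩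
  obtain ⟨D, hD, hDr⟩ := Finset.exists_subset_card_eq (s := (u ∩ v ∩ C).erase i) (n := r)
    (by rw [Finset.card_erase_of_mem hi]; omega)
  have hDuv : D ⊆ u ∩ v ∩ C := hD.trans (Finset.erase_subset _ _)
  have hDu : D ⊆ u := hDuv.trans (Finset.inter_subset_left.trans Finset.inter_subset_left)
  have hDv : D ⊆ v := hDuv.trans (Finset.inter_subset_left.trans Finset.inter_subset_right)
  have hDC : D ⊆ C := hDuv.trans Finset.inter_subset_right
  refine ⟨hu, hv, C \ D, tight_sdiff hn hiC hjC
    (hD.trans (Finset.erase_subset_erase _ Finset.inter_subset_right)) hDr, ?_, ?_⟩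
  · rw [card_inter_sdiff_of_subset hDu hDC, hu.2.2.2, hDr]
    omega
  · rw [Finset.inter_comm, card_inter_sdiff_of_subset hDv hDC, hv.2.2.2, hDr]
    omega

lemma tight_insert_erase (hn : t + 2 * r ≤ n) (hjC : j ∉ Finset.Icc 1 (t + 2 * r))
    {u : Finset ℕ} (hu : Tight n t r i j u) {x y : ℕ}
    (hx : x ∈ u ∩ Finset.Icc 1 (t + 2 * r)) (hxi : x ≠ i)
    (hy : y ∈ Finset.Icc 1 (t + 2 * r)) (hyu : y ∉ u) :
    Tight n t r i j (insert y (u.erase x)) := by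
  obtain ⟨hun, hiu, hju, hucard⟩ := hu
  refine ⟨Finset.insert_subset (Finset.Icc_subset_Icc_right hn hy)
      ((Finset.erase_subset _ _).trans hun),
    Finset.mem_insert_of_mem (Finset.mem_erase.2 ⟨hxi.symm, hiu⟩), ?_, ?_⟩
  · rw [Finset.mem_insert, Finset.mem_erase]
    rintro (rfl | ⟨-, h⟩)
    exacts [hjC hy, hju h]
  · have hy' : y ∉ (u ∩ Finset.Icc 1 (t + 2 * r)).erase x :=
      fun h => hyu (Finset.mem_inter.1 (Finset.mem_of_mem_erase h)).1
    rw [Finset.insert_inter_of_mem hy, Finset.erase_inter, Finset.card_insert_of_notMem hy',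
      Finset.card_erase_of_mem hx, hucard]
    have := Finset.card_pos.2 ⟨x, hx⟩
    omega

/-- The core `u ∩ [t+2r]` is moved towards that of `v` one element at a time; `t ≥ 2` keeps
consecutive cores sharing `r + 1` points. -/
lemma tightLinked_reflTransGen (ht : 2 ≤ t) (hn : t + 2 * r ≤ n)
    (hiC : i ∈ Finset.Icc 1 (t + 2 * r)) (hjC : j ∉ Finset.Icc 1 (t + 2 * r))
    {u v : Finset ℕ} (hu : Tight n t r i j u) (hv : Tight n t r i j v) :
    Relation.ReflTransGen (TightLinked n t r i j) u v := by
  set C := Finset.Icc 1 (t + 2 * r)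
  obtain ⟨k, hk⟩ : ∃ k, ((u ∩ C) \ (v ∩ C)).card = k := ⟨_, rfl⟩
  induction k generalizing u with
  | zero =>
    have hsub : u ∩ C ⊆ v ∩ C := by
      rwa [Finset.card_eq_zero, Finset.sdiff_eq_empty_iff_subset] at hk
    have hle : (u ∩ C).card ≤ (u ∩ v ∩ C).card := Finset.card_le_card fun x hx => by
      have := hsub hx
      simp only [Finset.mem_inter] at hx this ⊢
      tauto
    exact .single (tightLinked_of_card_inter hn hiC hjC hu hv
      (by rw [hu.2.2.2] at hle; omega : r + 1 ≤ (u ∩ v ∩ C).card))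
  | succ k ih =>
    have hvu : ((v ∩ C) \ (u ∩ C)).card = k + 1 :=
      hk ▸ Finset.card_sdiff_comm (hv.2.2.2.trans hu.2.2.2.symm)
    obtain ⟨x, hx⟩ := Finset.card_pos.1 (by omega : 0 < ((u ∩ C) \ (v ∩ C)).card)
    obtain ⟨y, hy⟩ := Finset.card_pos.1 (by omega : 0 < ((v ∩ C) \ (u ∩ C)).card)
    rw [Finset.mem_sdiff] at hx hy
    have hxi : x ≠ i := by
      rintro rfl
      exact hx.2 (Finset.mem_inter.2 ⟨hv.2.1, hiC⟩)
    have hyu : y ∉ u := fun h => hy.2 (Finset.mem_inter.2 ⟨h, (Finset.mem_inter.1 hy.1).2⟩)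
    have hu' := tight_insert_erase hn hjC hu hx.1 hxi (Finset.mem_inter.1 hy.1).2 hyu
    have hlink : TightLinked n t r i j u (insert y (u.erase x)) := by
      refine tightLinked_of_card_inter hn hiC hjC hu hu' (?_ : r + 1 ≤ (u ∩ _ ∩ C).card)
      have hsub : (u ∩ C).erase x ⊆ u ∩ insert y (u.erase x) ∩ C := fun z hz => by
        simp only [Finset.mem_erase, Finset.mem_inter, Finset.mem_insert] at hz ⊢
        tauto
      have := Finset.card_le_card hsub
      rw [Finset.card_erase_of_mem hx.1, hu.2.2.2] at this
      omega
    refine .head hlink (ih hu' ?_)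
    have hmeasure : (insert y (u.erase x) ∩ C) \ (v ∩ C) = ((u ∩ C) \ (v ∩ C)).erase x := by
      ext z
      simp only [Finset.mem_sdiff, Finset.mem_inter, Finset.mem_insert, Finset.mem_erase] at hy ⊢
      grind
    rw [hmeasure, Finset.card_erase_of_mem (Finset.mem_sdiff.2 hx), hk]
    rfl

end Connectivity

section Propagation

variable {n t r i j : ℕ} {𝓐 𝓑 𝓒 : Finset (Finset ℕ)}

/-- Along a link `u — w — v`, missing `u` from `𝓐` forces `w ∉ 𝓑`, which forces `v ∉ 𝓐`. -/
lemma tight_not_mem (ht : 2 ≤ t) (hn : t + 2 * r ≤ n)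
    (hiC : i ∈ Finset.Icc 1 (t + 2 * r)) (hjC : j ∉ Finset.Icc 1 (t + 2 * r))
    (hcross : CrossIntersecting t 𝓐 𝓑)
    (hsA : shiftFam i j 𝓐 = FF n t r) (hsB : shiftFam i j 𝓑 = FF n t r)
    {G₀ : Finset ℕ} (hG₀ : Tight n t r i j G₀) (hG₀𝓐 : G₀ ∉ 𝓐)
    {T : Finset ℕ} (hT : Tight n t r i j T) : T ∉ 𝓐 ∧ T ∉ 𝓑 := by
  have h𝓐 : ∀ T, Tight n t r i j T → T ∉ 𝓐 := by
    intro T hT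
    induction tightLinked_reflTransGen ht hn hiC hjC hG₀ hT with
    | refl => exact hG₀𝓐
    | tail _ hlink ih =>
      obtain ⟨hu, hv, w, hw, huw, hwv⟩ := hlink
      have hw𝓑 := not_mem_of_card_inter_eq hcross hsA hu.mem_FF (ih hu) hw.2.1 hw.2.2.1 huw
      exact not_mem_of_card_inter_eq hcross.symm hsB hw.mem_FF hw𝓑 hv.2.1 hv.2.2.1 hwv
  refine ⟨h𝓐 T hT, ?_⟩
  obtain ⟨-, -, w, hw, -, hwT⟩ : TightLinked n t r i j T T :=
    tightLinked_of_card_inter hn hiC hjC hT hT (by rw [Finset.inter_self, hT.2.2.2]; omega)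
  exact not_mem_of_card_inter_eq hcross hsA hw.mem_FF (h𝓐 w hw) hT.2.1 hT.2.2.1 hwT

lemma mem_iff_of_tight_not_mem (hi : i ∈ Finset.Icc 1 n) (hj : j ∈ Finset.Icc 1 n)
    (hs : shiftFam i j 𝓒 = FF n t r) (hT : ∀ T, Tight n t r i j T → T ∉ 𝓒) (K : Finset ℕ) :
    K ∈ 𝓒 ↔
      (K ∈ FF n t r ∧ ¬ Tight n t r i j K) ∨ Tight n t r i j (K.image (Equiv.swap i j)) := by
  constructor
  · intro hK
    by_cases hKF : K ∈ FF n t r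
    · exact .inl ⟨hKF, fun h => hT K h hK⟩
    · obtain ⟨hσF, hσ𝓒⟩ := image_swap_mem_shiftFam_of_mem hs hK hKF
      exact .inr (tight_of_mem_FF_not_mem hi hj hs hσF hσ𝓒).2.2
  · rintro (⟨hKF, hK⟩ | hσK)
    · by_contra hK𝓒
      exact hK (tight_of_mem_FF_not_mem hi hj hs hKF hK𝓒).2.2
    · have := (image_swap_mem_of_mem_shiftFam hs hσK.mem_FF (hT _ hσK)).2.2.1
      rwa [image_swap_image_swap] at this

lemma eq_image_swap_of_tight_not_mem (hi : i ∈ Finset.Icc 1 n) (hj : j ∈ Finset.Icc 1 n)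
    (hiC : i ∈ Finset.Icc 1 (t + 2 * r)) (hjC : j ∉ Finset.Icc 1 (t + 2 * r))
    (hs : shiftFam i j 𝓒 = FF n t r) (hT : ∀ T, Tight n t r i j T → T ∉ 𝓒) :
    𝓒 = (FF n t r).image fun G => G.image (Equiv.swap i j) := by
  ext K
  rw [mem_image_image_swap_iff, mem_iff_of_tight_not_mem hi hj hs hT,
    image_swap_mem_FF_iff hi hj hiC hjC]

end Propagation

end Frankl

open Frankl in
theorem statement_7_general (n t r i j : ℕ) (ht : 2 ≤ t) (hn : t + 2 * r ≤ n)
    (hi : 1 ≤ i) (hij : i < j) (hj : j ≤ n)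
    (𝓐 𝓑 : Finset (Finset ℕ))
    (hcross : CrossIntersecting t 𝓐 𝓑)
    (hsA : shiftFam i j 𝓐 = FF n t r) (hsB : shiftFam i j 𝓑 = FF n t r) :
    𝓐 = 𝓑 ∧ Isom n 𝓐 (FF n t r) := by
  have hiI : i ∈ Finset.Icc 1 n := Finset.mem_Icc.2 ⟨hi, by omega⟩
  have hjI : j ∈ Finset.Icc 1 n := Finset.mem_Icc.2 ⟨by omega, hj⟩
  by_cases hmissing : ∃ G ∈ FF n t r, G ∉ 𝓐 ∨ G ∉ 𝓑
  · obtain ⟨hiC, hjC, hT⟩ : i ∈ Finset.Icc 1 (t + 2 * r) ∧ j ∉ Finset.Icc 1 (t + 2 * r) ∧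
        ∀ T, Tight n t r i j T → T ∉ 𝓐 ∧ T ∉ 𝓑 := by
      obtain ⟨G, hG, hG𝓐 | hG𝓑⟩ := hmissing
      · obtain ⟨hiC, hjC, hGt⟩ := tight_of_mem_FF_not_mem hiI hjI hsA hG hG𝓐
        exact ⟨hiC, hjC, fun T hT => tight_not_mem ht hn hiC hjC hcross hsA hsB hGt hG𝓐 hT⟩
      · obtain ⟨hiC, hjC, hGt⟩ := tight_of_mem_FF_not_mem hiI hjI hsB hG hG𝓑
        exact ⟨hiC, hjC, fun T hT =>
          (tight_not_mem ht hn hiC hjC hcross.symm hsB hsA hGt hG𝓑 hT).symm⟩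
    have h𝓐 := eq_image_swap_of_tight_not_mem hiI hjI hiC hjC hsA fun T hT' => (hT T hT').1
    have h𝓑 := eq_image_swap_of_tight_not_mem hiI hjI hiC hjC hsB fun T hT' => (hT T hT').2
    exact ⟨h𝓐.trans h𝓑.symm, Equiv.swap i j, fun k hk => swap_apply_mem hiI hjI hk, h𝓐⟩
  · push Not at hmissing
    have h𝓐 := eq_of_subset_of_shiftFam_eq hsA fun G hG => (hmissing G hG).1
    have h𝓑 := eq_of_subset_of_shiftFam_eq hsB fun G hG => (hmissing G hG).2
    exact ⟨h𝓐.trans h𝓑.symm, Equiv.refl ℕ, fun k hk => hk, by simp [h𝓐]⟩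

/-- if both shifts equal `F_r^t` then the families coincide
and are isomorphic to `F_r^t`. -/
theorem statement_7 (n t r i j : ℕ) (ht : 2 ≤ t) (hn : t + 2 * r ≤ n)
    (hi : 1 ≤ i) (hij : i < j) (hj : j ≤ n)
    (𝓐 𝓑 : Finset (Finset ℕ))
    (hA : 𝓐 ⊆ (Finset.Icc 1 n).powerset) (hB : 𝓑 ⊆ (Finset.Icc 1 n).powerset)
    (hcross : CrossIntersecting t 𝓐 𝓑)
    (hsA : shiftFam i j 𝓐 = FF n t r) (hsB : shiftFam i j 𝓑 = FF n t r) :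
    𝓐 = 𝓑 ∧ Isom n 𝓐 (FF n t r) :=
  statement_7_general n t r i j ht hn hi hij hj 𝓐 𝓑 hcross hsA hsB
end

section
/- Let t ≥ 1 be an integer and let A, B ⊆ 2^[n] be shifted, inclusion maximal, cross t-intersecting families with u := λ(A), v := λ(B), u + v = 2t and u ≤ v. Suppose A ∩ hat{F}^u ≠ ∅ and B ∩ hat{F}^v ≠ ∅. Then there exist unique nonnegative integers s and s' such that (A ∩ hat{F}^u) ∪ (A ∩ ddot{F}^u) ⊆ F_s^u and (B ∩ hat{F}^v) ∪ (B ∩ ddot{F}^v) ⊆ F_{s'}^v. Moreover, v − u is even and s − s' = (v − u)/2; in particular s ≥ s'. -/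
open Finset

open scoped Classical

namespace S10

def cc (F : Finset ℕ) (j : ℕ) : ℕ := (F ∩ Finset.Icc 1 j).card

lemma cc_zero (F : Finset ℕ) : cc F 0 = 0 := by simp [cc]

lemma cc_succ (F : Finset ℕ) (j : ℕ) :
    cc F (j+1) = cc F j + (if (j+1) ∈ F then 1 else 0) := by
  unfold cc
  have h : Finset.Icc 1 (j+1) = insert (j+1) (Finset.Icc 1 j) := by
    rw [← Finset.Ico_insert_right (by omega : 1 ≤ j+1), Finset.Ico_add_one_right_eq_Icc]
  rw [h]
  by_cases hF : (j+1) ∈ F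
  · rw [Finset.inter_insert_of_mem hF, Finset.card_insert_of_notMem (by simp)]
    simp [hF]
  · rw [Finset.inter_insert_of_notMem hF]
    simp [hF]

lemma cc_le (F : Finset ℕ) (j : ℕ) : cc F j ≤ j := by
  calc cc F j ≤ (Finset.Icc 1 j).card := Finset.card_le_card (Finset.inter_subset_right)
  _ = j := by simp

lemma cc_stable {F : Finset ℕ} {n : ℕ} (hF : F ⊆ Finset.Icc 1 n) {j : ℕ} (h : n ≤ j) :
    cc F j = F.card := by
  unfold cc
  congr 1
  rw [Finset.inter_eq_left]
  exact hF.trans (Finset.Icc_subset_Icc_right h)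

lemma shift_mem {n : ℕ} {𝓐 : Finset (Finset ℕ)} (hS : Shifted n 𝓐)
    {A : Finset ℕ} (hA : A ∈ 𝓐) {i j : ℕ} (h1 : 1 ≤ i) (hij : i < j) (hjn : j ≤ n)
    (hjA : j ∈ A) (hiA : i ∉ A) : insert i (A.erase j) ∈ 𝓐 := by
  by_cases h : insert i (A.erase j) ∈ 𝓐
  · exact h
  · have h2 : shiftSet i j 𝓐 A ∈ shiftFam i j 𝓐 := Finset.mem_image_of_mem _ hA
    rw [hS i j h1 hij hjn] at h2
    simpa [shiftSet, hjA, hiA, h] using h2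

lemma dom_mem {n : ℕ} {𝓐 : Finset (Finset ℕ)} (hS : Shifted n 𝓐) (hM : InclMax n 𝓐) :
    ∀ N : ℕ, ∀ A ∈ 𝓐, A ⊆ Finset.Icc 1 n → (∑ a ∈ A, a) = N → ∀ X ⊆ Finset.Icc 1 n,
      (∀ j, cc A j ≤ cc X j) → X ∈ 𝓐 := by
  intro N
  induction N using Nat.strong_induction_on with
  | _ N ih =>
    intro A hA hAn hsum X hXn hdom
    by_cases hAX : A ⊆ X
    · exact hM A hA X hAX hXn
    · -- basic facts
      have hcard : A.card ≤ X.card := by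
        have := hdom n
        unfold cc at this
        rwa [Finset.inter_eq_left.mpr hAn, Finset.inter_eq_left.mpr hXn] at this
      have hXA : (X \ A).Nonempty := by
        rw [Finset.sdiff_nonempty]
        intro hXsub
        exact hAX (le_antisymm hXsub (Finset.eq_of_subset_of_card_le hXsub hcard).ge ▸ le_rfl)
      set i := (X \ A).min' hXA with hi
      have hiX : i ∈ X := (Finset.mem_sdiff.mp ((X \ A).min'_mem hXA)).1
      have hiA : i ∉ A := (Finset.mem_sdiff.mp ((X \ A).min'_mem hXA)).2
      have hi1 : 1 ≤ i := (Finset.mem_Icc.mp (hXn hiX)).1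
      have himin : ∀ y ∈ X, y ∉ A → i ≤ y := fun y hy hy2 =>
        Finset.min'_le _ _ (Finset.mem_sdiff.mpr ⟨hy, hy2⟩)
      -- X ∩ [1, i-1] ⊆ A
      have hXlow : X ∩ Finset.Icc 1 (i-1) ⊆ A ∩ Finset.Icc 1 (i-1) := by
        intro x hx
        rw [Finset.mem_inter] at hx ⊢
        refine ⟨?_, hx.2⟩
        by_contra hxA
        have := himin x hx.1 hxA
        have := (Finset.mem_Icc.mp hx.2).2
        omega
      have hXlow_eq : X ∩ Finset.Icc 1 (i-1) = A ∩ Finset.Icc 1 (i-1) :=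
        Finset.eq_of_subset_of_card_le hXlow (hdom (i-1))
      -- exists a ∈ A with i < a
      have hex : ∃ a ∈ A, i < a := by
        by_contra hno
        push_neg at hno
        have hAlow : A ⊆ Finset.Icc 1 (i-1) := by
          intro a ha
          have h1 := (Finset.mem_Icc.mp (hAn ha)).1
          have h2 := hno a ha
          have : a ≠ i := fun h => hiA (h ▸ ha)
          exact Finset.mem_Icc.mpr ⟨h1, by omega⟩
        apply hAX
        intro a ha
        have : a ∈ A ∩ Finset.Icc 1 (i-1) := Finset.mem_inter.mpr ⟨ha, hAlow ha⟩
        rw [← hXlow_eq] at this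
        exact (Finset.mem_inter.mp this).1
      set j := (A.filter (fun a => i < a)).min' (by
        obtain ⟨a, ha, hia⟩ := hex
        exact ⟨a, Finset.mem_filter.mpr ⟨ha, hia⟩⟩) with hjdef
      have hjmem : j ∈ A.filter (fun a => i < a) := Finset.min'_mem _ _
      have hjA : j ∈ A := (Finset.mem_filter.mp hjmem).1
      have hij : i < j := (Finset.mem_filter.mp hjmem).2
      have hjn : j ≤ n := (Finset.mem_Icc.mp (hAn hjA)).2
      have hjmin : ∀ a ∈ A, i < a → j ≤ a := fun a ha hia =>
        Finset.min'_le _ _ (Finset.mem_filter.mpr ⟨ha, hia⟩)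
      -- strictness claim
      have hstrict : ∀ m, i ≤ m → m < j → cc A m < cc X m := by
        intro m him hmj
        have hAm : A ∩ Finset.Icc 1 m = A ∩ Finset.Icc 1 (i-1) := by
          ext x
          simp only [Finset.mem_inter, Finset.mem_Icc]
          constructor
          · rintro ⟨hx, h1, h2⟩
            refine ⟨hx, h1, ?_⟩
            rcases lt_or_ge x i with h | h
            · have : x ≠ i := by omega
              omega
            · rcases eq_or_lt_of_le h with h' | h'
              · exact absurd (h' ▸ hx) hiA
              · exact absurd (hjmin x hx h') (by omega)
          · rintro ⟨hx, h1, h2⟩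
            exact ⟨hx, h1, by omega⟩
        have hins : insert i (X ∩ Finset.Icc 1 (i-1)) ⊆ X ∩ Finset.Icc 1 m := by
          intro x hx
          rcases Finset.mem_insert.mp hx with h | h
          · subst h; exact Finset.mem_inter.mpr ⟨hiX, Finset.mem_Icc.mpr ⟨hi1, him⟩⟩
          · have := Finset.mem_inter.mp h
            exact Finset.mem_inter.mpr ⟨this.1,
              Finset.mem_Icc.mpr ⟨(Finset.mem_Icc.mp this.2).1, by
                have := (Finset.mem_Icc.mp this.2).2; omega⟩⟩
        have hnotin : i ∉ X ∩ Finset.Icc 1 (i-1) := by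
          intro h
          have := (Finset.mem_Icc.mp (Finset.mem_inter.mp h).2).2
          omega
        calc cc A m = (X ∩ Finset.Icc 1 (i-1)).card := by
              unfold cc; rw [hAm, ← hXlow_eq]
        _ < (insert i (X ∩ Finset.Icc 1 (i-1))).card := by
              rw [Finset.card_insert_of_notMem hnotin]; omega
        _ ≤ cc X m := Finset.card_le_card hins
      -- the shifted set
      set A' := insert i (A.erase j) with hA'
      have hA'mem : A' ∈ 𝓐 := shift_mem hS hA hi1 hij hjn hjA hiA
      have hA'n : A' ⊆ Finset.Icc 1 n := by
        intro x hx
        rcases Finset.mem_insert.mp hx with h | h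
        · exact h ▸ hXn hiX
        · exact hAn (Finset.mem_of_mem_erase h)
      have hsum' : (∑ a ∈ A', a) < N := by
        rw [hA']
        rw [Finset.sum_insert (fun h => hiA (Finset.mem_of_mem_erase h))]
        have he : j + ∑ x ∈ A.erase j, x = ∑ a ∈ A, a := Finset.add_sum_erase A (fun x => x) hjA
        omega
      -- domination of A'
      have hdom' : ∀ m, cc A' m ≤ cc X m := by
        intro m
        rcases lt_or_ge m i with hm | hm
        · have : A' ∩ Finset.Icc 1 m = A ∩ Finset.Icc 1 m := by
            ext x
            simp only [hA', Finset.mem_inter, Finset.mem_insert, Finset.mem_erase, Finset.mem_Icc]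
            constructor
            · rintro ⟨h | ⟨hx, hxA⟩, h1, h2⟩
              · omega
              · exact ⟨hxA, h1, h2⟩
            · rintro ⟨hx, h1, h2⟩
              exact ⟨Or.inr ⟨by omega, hx⟩, h1, h2⟩
          unfold cc; rw [this]; exact hdom m
        · rcases lt_or_ge m j with hmj | hmj
          · have : A' ∩ Finset.Icc 1 m = insert i (A ∩ Finset.Icc 1 m) := by
              ext x
              simp only [hA', Finset.mem_inter, Finset.mem_insert, Finset.mem_erase, Finset.mem_Icc]
              constructor
              · rintro ⟨h | ⟨hx, hxA⟩, h1, h2⟩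
                · exact Or.inl h
                · exact Or.inr ⟨hxA, h1, h2⟩
              · rintro (h | ⟨hx, h1, h2⟩)
                · exact ⟨Or.inl h, by omega⟩
                · refine ⟨Or.inr ⟨?_, hx⟩, h1, h2⟩
                  omega
            have hni : i ∉ A ∩ Finset.Icc 1 m := fun h => hiA (Finset.mem_inter.mp h).1
            unfold cc
            rw [this, Finset.card_insert_of_notMem hni]
            have := hstrict m hm hmj
            unfold cc at this
            omega
          · -- m ≥ j : card equal
            have hiin : i ∈ Finset.Icc 1 m := Finset.mem_Icc.mpr ⟨hi1, by omega⟩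
            have hcards : (A' ∩ Finset.Icc 1 m).card = (A ∩ Finset.Icc 1 m).card := by
              have e1 : A' ∩ Finset.Icc 1 m = insert i ((A ∩ Finset.Icc 1 m).erase j) := by
                ext x
                simp only [hA', Finset.mem_inter, Finset.mem_insert, Finset.mem_erase, Finset.mem_Icc]
                constructor
                · rintro ⟨h | ⟨hx, hxA⟩, h1, h2⟩
                  · exact Or.inl h
                  · exact Or.inr ⟨hx, ⟨hxA, h1, h2⟩⟩
                · rintro (h | ⟨hx, hxA, h1, h2⟩)
                  · subst h; exact ⟨Or.inl rfl, by omega⟩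
                  · exact ⟨Or.inr ⟨hx, hxA⟩, h1, h2⟩
              rw [e1, Finset.card_insert_of_notMem (by
                intro h
                exact hiA (Finset.mem_inter.mp (Finset.mem_of_mem_erase h)).1)]
              rw [Finset.card_erase_of_mem (Finset.mem_inter.mpr ⟨hjA,
                Finset.mem_Icc.mpr ⟨by omega, hmj⟩⟩)]
              have : 1 ≤ (A ∩ Finset.Icc 1 m).card := Finset.card_pos.mpr
                ⟨j, Finset.mem_inter.mpr ⟨hjA, Finset.mem_Icc.mpr ⟨by omega, hmj⟩⟩⟩
              omega
            unfold cc
            rw [hcards]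
            exact hdom m
      exact ih _ hsum' A' hA'mem hA'n rfl X hXn hdom'
/-- running maximum of the summed walk -/
def Mw (g : ℕ → ℤ) : ℕ → ℤ
  | 0 => 0
  | (j+1) => max (Mw g j) (g (j+1))

lemma Mw_mono (g : ℕ → ℤ) (j : ℕ) : Mw g j ≤ Mw g (j+1) := le_max_left _ _

lemma Mw_ge (g : ℕ → ℤ) (hg0 : g 0 = 0) : ∀ j, g j ≤ Mw g j
  | 0 => by simp [Mw, hg0]
  | (j+1) => le_max_right _ _

lemma Mw_exists (g : ℕ → ℤ) : ∀ j, Mw g j = 0 ∨ ∃ i ≤ j, Mw g j = g i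
  | 0 => Or.inl rfl
  | (j+1) => by
    rcases le_or_gt (g (j+1)) (Mw g j) with h | h
    · have : Mw g (j+1) = Mw g j := max_eq_left h
      rcases Mw_exists g j with h2 | ⟨i, hi, h2⟩
      · exact Or.inl (this ▸ h2)
      · exact Or.inr ⟨i, by omega, this ▸ h2⟩
    · exact Or.inr ⟨j+1, le_rfl, max_eq_right h.le⟩

def gw (A B : Finset ℕ) (j : ℕ) : ℤ := 2*(cc A j : ℤ) + 2*(cc B j : ℤ) - 2*j

lemma gw_zero (A B : Finset ℕ) : gw A B 0 = 0 := by simp [gw, cc_zero]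

lemma gw_succ (A B : Finset ℕ) (j : ℕ) : gw A B (j+1) = gw A B j
    + 2*(if (j+1) ∈ A then (1:ℤ) else 0) + 2*(if (j+1) ∈ B then (1:ℤ) else 0) - 2 := by
  unfold gw
  rw [cc_succ A, cc_succ B]
  push_cast
  split_ifs <;> ring

/-- The key construction: given `A, B ⊆ [1,n]`, there is `X ⊆ [1,n]` dominating `A`
with `2 |X ∩ B| = max_j (w_A + w_B)(j)`. -/
lemma exists_dominator (n : ℕ) (A B : Finset ℕ) (hAn : A ⊆ Finset.Icc 1 n)
    (hBn : B ⊆ Finset.Icc 1 n) :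
    ∃ X ⊆ Finset.Icc 1 n, (∀ j, cc A j ≤ cc X j) ∧
      2 * ((X ∩ B).card : ℤ) = Mw (gw A B) n := by
  set g : ℕ → ℤ := gw A B with hg
  have hg0 : g 0 = 0 := gw_zero A B
  set X : Finset ℕ := (Finset.Icc 1 n).filter (fun j => Mw g (j-1) < Mw g j ∨ j ∉ B) with hX
  have hXn : X ⊆ Finset.Icc 1 n := Finset.filter_subset _ _
  have hgeven : ∀ i : ℕ, Even (g i) := by
    intro i
    rw [hg]
    unfold gw
    exact ⟨(cc A i : ℤ) + (cc B i : ℤ) - i, by push_cast; ring⟩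
  have hMeven : ∀ i : ℕ, Even (Mw g i) := by
    intro i
    rcases Mw_exists g i with h | ⟨i', _, h⟩
    · rw [h]; exact Even.zero
    · rw [h]; exact hgeven i'
  -- main induction
  have main : ∀ j, j ≤ n →
      2 * (cc X j : ℤ) = Mw g j + 2*j - 2*(cc B j : ℤ) ∧
      2 * ((X ∩ B ∩ Finset.Icc 1 j).card : ℤ) = Mw g j := by
    intro j
    induction j with
    | zero => intro _; simp [cc_zero, Mw, cc]
    | succ j ihj =>
      intro hjn
      obtain ⟨P1, P2⟩ := ihj (by omega)
      have hgstep : g (j+1) = g j + 2*(if (j+1) ∈ A then (1:ℤ) else 0)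
          + 2*(if (j+1) ∈ B then (1:ℤ) else 0) - 2 := gw_succ A B j
      have hMw : Mw g (j+1) = max (Mw g j) (g (j+1)) := rfl
      have hgM : g j ≤ Mw g j := Mw_ge g hg0 j
      have hccX : cc X (j+1) = cc X j + (if (j+1) ∈ X then 1 else 0) := cc_succ X j
      have hccB : cc B (j+1) = cc B j + (if (j+1) ∈ B then 1 else 0) := cc_succ B j
      have hIcc : X ∩ B ∩ Finset.Icc 1 (j+1) =
          if (j+1) ∈ X ∩ B then insert (j+1) (X ∩ B ∩ Finset.Icc 1 j)
          else X ∩ B ∩ Finset.Icc 1 j := by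
        have h : Finset.Icc 1 (j+1) = insert (j+1) (Finset.Icc 1 j) := by
          rw [← Finset.Ico_insert_right (by omega : 1 ≤ j+1), Finset.Ico_add_one_right_eq_Icc]
        rw [h]
        by_cases hm : (j+1) ∈ X ∩ B
        · rw [if_pos hm, Finset.inter_insert_of_mem hm]
        · rw [if_neg hm, Finset.inter_insert_of_notMem hm]
      have hcard2 : ((X ∩ B ∩ Finset.Icc 1 (j+1)).card : ℤ) =
          ((X ∩ B ∩ Finset.Icc 1 j).card : ℤ) + (if (j+1) ∈ X ∩ B then 1 else 0) := by
        rw [hIcc]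
        by_cases hm : (j+1) ∈ X ∩ B
        · rw [if_pos hm, if_pos hm, Finset.card_insert_of_notMem (by
            intro h
            have := (Finset.mem_Icc.mp (Finset.mem_inter.mp h).2).2
            omega)]
          push_cast; ring
        · rw [if_neg hm, if_neg hm]; simp
      by_cases hjump : Mw g j < Mw g (j+1)
      · -- jump case : M(j+1) = g(j+1), jump = 2, (j+1) ∈ A ∩ B ∩ X
        have hMeq : Mw g (j+1) = g (j+1) := by
          rw [hMw] at hjump ⊢
          rcases max_cases (Mw g j) (g (j+1)) with ⟨h1, _⟩ | ⟨h1, _⟩ <;> omega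
        have hAB : (j+1) ∈ A ∧ (j+1) ∈ B := by
          by_contra hc
          have : g (j+1) ≤ g j := by
            rw [hgstep]
            by_cases h1 : (j+1) ∈ A <;> by_cases h2 : (j+1) ∈ B <;>
              simp [h1, h2] at hc ⊢ <;> omega
          omega
        have hjX : (j+1) ∈ X := by
          rw [hX, Finset.mem_filter]
          exact ⟨Finset.mem_Icc.mpr ⟨by omega, hjn⟩, Or.inl (by simpa using hjump)⟩
        have hjump2 : Mw g (j+1) = Mw g j + 2 := by
          have h1 : g (j+1) = g j + 2 := by rw [hgstep, if_pos hAB.1, if_pos hAB.2]; ring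
          obtain ⟨k, hk⟩ := hMeven j
          obtain ⟨k', hk'⟩ := hgeven j
          omega
        constructor
        · rw [hccX, if_pos hjX, hccB, if_pos hAB.2, hjump2]
          push_cast
          push_cast at P1
          omega
        · rw [hcard2, if_pos (Finset.mem_inter.mpr ⟨hjX, hAB.2⟩), hjump2]
          omega
      · -- no jump
        have hMeq : Mw g (j+1) = Mw g j := le_antisymm (by omega) (Mw_mono g j)
        by_cases hB : (j+1) ∈ B
        · have hjX : (j+1) ∉ X := by
            rw [hX, Finset.mem_filter]
            rintro ⟨_, h | h⟩
            · simp at h; omega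
            · exact h hB
          constructor
          · rw [hccX, if_neg hjX, hccB, if_pos hB, hMeq]
            push_cast
            omega
          · rw [hcard2, if_neg (fun h => hjX (Finset.mem_inter.mp h).1), hMeq]
            exact P2
        · have hjX : (j+1) ∈ X := by
            rw [hX, Finset.mem_filter]
            exact ⟨Finset.mem_Icc.mpr ⟨by omega, hjn⟩, Or.inr hB⟩
          constructor
          · rw [hccX, if_pos hjX, hccB, if_neg hB, hMeq]
            push_cast
            omega
          · rw [hcard2, if_neg (fun h => hB (Finset.mem_inter.mp h).2), hMeq]
            exact P2
    
  refine ⟨X, hXn, ?_, ?_⟩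
  · intro j
    rcases le_or_gt j n with hj | hj
    · obtain ⟨P1, _⟩ := main j hj
      have h1 : g j ≤ Mw g j := Mw_ge g hg0 j
      have : 2*(cc A j : ℤ) = g j + 2*j - 2*(cc B j : ℤ) := by rw [hg]; unfold gw; ring
      omega
    · obtain ⟨P1, _⟩ := main n le_rfl
      have hA1 : cc A j = A.card := cc_stable hAn hj.le
      have hA2 : cc A n = A.card := cc_stable hAn le_rfl
      have hX1 : cc X j = X.card := cc_stable hXn hj.le
      have hX2 : cc X n = X.card := cc_stable hXn le_rfl
      have h1 : g n ≤ Mw g n := Mw_ge g hg0 n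
      have : 2*(cc A n : ℤ) = g n + 2*n - 2*(cc B n : ℤ) := by rw [hg]; unfold gw; ring
      have hfin : cc A n ≤ cc X n := by omega
      omega
  · obtain ⟨_, P2⟩ := main n le_rfl
    have : X ∩ B ∩ Finset.Icc 1 n = X ∩ B := by
      rw [Finset.inter_eq_left]
      exact (Finset.inter_subset_left).trans hXn
    rwa [this] at P2

lemma not_reach {n ℓ : ℕ} {F : Finset ℕ} (h : ¬ Reaches n (ℓ+1) F) :
    ∀ j ≤ n, 2 * cc F j ≤ j + ℓ := by
  intro j hj
  by_contra hc
  exact h ⟨j, hj, by unfold cc at hc; omega⟩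

lemma hit_eq {n ℓ : ℕ} {F : Finset ℕ} (h : hitCount n ℓ F = 1) {j1 j2 : ℕ}
    (h1n : j1 ≤ n) (h2n : j2 ≤ n)
    (h1 : 2 * cc F j1 = j1 + ℓ) (h2 : 2 * cc F j2 = j2 + ℓ) : j1 = j2 := by
  have m1 : j1 ∈ (Finset.range (n + 1)).filter
      (fun j => 2 * (F ∩ Finset.Icc 1 j).card = j + ℓ) :=
    Finset.mem_filter.mpr ⟨Finset.mem_range.mpr (by omega), h1⟩
  have m2 : j2 ∈ (Finset.range (n + 1)).filter
      (fun j => 2 * (F ∩ Finset.Icc 1 j).card = j + ℓ) :=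
    Finset.mem_filter.mpr ⟨Finset.mem_range.mpr (by omega), h2⟩
  exact Finset.card_le_one.mp (le_of_eq h) _ m1 _ m2

lemma common_hit {n t : ℕ} (ht : 1 ≤ t) {𝓐 𝓑 : Finset (Finset ℕ)}
    (hSA : Shifted n 𝓐) (hMA : InclMax n 𝓐)
    (hcross : CrossIntersecting t 𝓐 𝓑) {u v : ℕ} (huv : u + v = 2 * t)
    {A B : Finset ℕ} (hAmem : A ∈ 𝓐) (hBmem : B ∈ 𝓑)
    (hAn : A ⊆ Finset.Icc 1 n) (hBn : B ⊆ Finset.Icc 1 n)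
    (hAr : ¬ Reaches n (u+1) A) (hBr : ¬ Reaches n (v+1) B) :
    ∃ j ≤ n, 2 * cc A j = j + u ∧ 2 * cc B j = j + v := by
  obtain ⟨X, hXn, hdomX, hXB⟩ := exists_dominator n A B hAn hBn
  have hXmem : X ∈ 𝓐 := dom_mem hSA hMA (∑ a ∈ A, a) A hAmem hAn rfl X hXn hdomX
  have hcard : t ≤ (X ∩ B).card := hcross X hXmem B hBmem
  have h2t : (2 * t : ℤ) ≤ Mw (gw A B) n := by
    rw [← hXB]
    push_cast
    omega
  rcases Mw_exists (gw A B) n with h | ⟨i, hin, h⟩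
  · rw [h] at h2t
    have : (0:ℤ) < 2 * t := by positivity
    omega
  · rw [h] at h2t
    unfold gw at h2t
    have hiu := not_reach hAr i hin
    have hiv := not_reach hBr i hin
    refine ⟨i, hin, ?_, ?_⟩ <;> omega

end S10

/-- existence and uniqueness of the parameters `s, s'`. -/
theorem statement_10 (n t : ℕ) (ht : 1 ≤ t)
    (𝓐 𝓑 : Finset (Finset ℕ))
    (hA : 𝓐 ⊆ (Finset.Icc 1 n).powerset) (hB : 𝓑 ⊆ (Finset.Icc 1 n).powerset)
    (hSA : Shifted n 𝓐) (hSB : Shifted n 𝓑)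
    (hMA : InclMax n 𝓐) (hMB : InclMax n 𝓑)
    (hcross : CrossIntersecting t 𝓐 𝓑)
    (u v : ℕ) (hu : u = lam n 𝓐) (hv : v = lam n 𝓑)
    (huv : u + v = 2 * t) (hule : u ≤ v)
    (hAhat : (𝓐 ∩ Fhat n u).Nonempty) (hBhat : (𝓑 ∩ Fhat n v).Nonempty) :
    ∃ s s' : ℕ,
      ((𝓐 ∩ Fhat n u) ∪ (𝓐 ∩ Fddot n u) ⊆ FF n u s) ∧
      ((𝓑 ∩ Fhat n v) ∪ (𝓑 ∩ Fddot n v) ⊆ FF n v s') ∧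
      (∀ s₂ s₂' : ℕ,
        ((𝓐 ∩ Fhat n u) ∪ (𝓐 ∩ Fddot n u) ⊆ FF n u s₂) →
        ((𝓑 ∩ Fhat n v) ∪ (𝓑 ∩ Fddot n v) ⊆ FF n v s₂') →
        s₂ = s ∧ s₂' = s') ∧
      2 ∣ (v - u) ∧ s = s' + (v - u) / 2 := by
  classical
  obtain ⟨A₀, hA₀⟩ := hAhat
  obtain ⟨B₀, hB₀⟩ := hBhat
  rw [Finset.mem_inter] at hA₀ hB₀
  obtain ⟨hA₀mem, hA₀hat⟩ := hA₀
  obtain ⟨hB₀mem, hB₀hat⟩ := hB₀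
  rw [Fhat, Finset.mem_filter] at hA₀hat hB₀hat
  obtain ⟨hA₀pow, hA₀r, hA₀cnt⟩ := hA₀hat
  obtain ⟨hB₀pow, hB₀r, hB₀cnt⟩ := hB₀hat
  have hA₀n : A₀ ⊆ Finset.Icc 1 n := Finset.mem_powerset.mp hA₀pow
  have hB₀n : B₀ ⊆ Finset.Icc 1 n := Finset.mem_powerset.mp hB₀pow
  -- the common hit step of the two witnesses
  obtain ⟨j₀, hj₀n, hA₀hit, hB₀hit⟩ :=
    S10.common_hit ht hSA hMA hcross huv hA₀mem hB₀mem hA₀n hB₀n hA₀r hB₀r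
  have hj₀u : u ≤ j₀ := by have := S10.cc_le A₀ j₀; omega
  have hj₀v : v ≤ j₀ := by have := S10.cc_le B₀ j₀; omega
  refine ⟨(j₀ - u) / 2, (j₀ - v) / 2, ?_, ?_, ?_, ?_, ?_⟩
  case _ =>
    -- 𝓐-side containment
    intro F hF
    have hF' : F ∈ 𝓐 ∧ F ⊆ Finset.Icc 1 n ∧ ¬ Reaches n (u+1) F := by
      rcases Finset.mem_union.mp hF with h | h <;>
        rw [Finset.mem_inter] at h
      · rw [Fhat, Finset.mem_filter] at h
        exact ⟨h.1, Finset.mem_powerset.mp h.2.1, h.2.2.1⟩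
      · rw [Fddot, Finset.mem_filter] at h
        exact ⟨h.1, Finset.mem_powerset.mp h.2.1, h.2.2.1⟩
    obtain ⟨hFmem, hFn, hFr⟩ := hF'
    obtain ⟨j, hjn, hFhit, hBhit⟩ :=
      S10.common_hit ht hSA hMA hcross huv hFmem hB₀mem hFn hB₀n hFr hB₀r
    have hjj₀ : j = j₀ := S10.hit_eq hB₀cnt hjn hj₀n hBhit hB₀hit
    rw [hjj₀] at hFhit
    rw [FF, Finset.mem_filter]
    refine ⟨Finset.mem_powerset.mpr hFn, ?_⟩
    have he : u + 2 * ((j₀ - u) / 2) = j₀ := by omega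
    rw [he]
    have : 2 * S10.cc F j₀ = j₀ + u := hFhit
    unfold S10.cc at this
    omega
  case _ =>
    -- 𝓑-side containment
    intro F hF
    have hF' : F ∈ 𝓑 ∧ F ⊆ Finset.Icc 1 n ∧ ¬ Reaches n (v+1) F := by
      rcases Finset.mem_union.mp hF with h | h <;>
        rw [Finset.mem_inter] at h
      · rw [Fhat, Finset.mem_filter] at h
        exact ⟨h.1, Finset.mem_powerset.mp h.2.1, h.2.2.1⟩
      · rw [Fddot, Finset.mem_filter] at h
        exact ⟨h.1, Finset.mem_powerset.mp h.2.1, h.2.2.1⟩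
    obtain ⟨hFmem, hFn, hFr⟩ := hF'
    obtain ⟨j, hjn, hAhit, hFhit⟩ :=
      S10.common_hit ht hSA hMA hcross huv hA₀mem hFmem hA₀n hFn hA₀r hFr
    have hjj₀ : j = j₀ := S10.hit_eq hA₀cnt hjn hj₀n hAhit hA₀hit
    rw [hjj₀] at hFhit
    rw [FF, Finset.mem_filter]
    refine ⟨Finset.mem_powerset.mpr hFn, ?_⟩
    have he : v + 2 * ((j₀ - v) / 2) = j₀ := by omega
    rw [he]
    have : 2 * S10.cc F j₀ = j₀ + v := hFhit
    unfold S10.cc at this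
    omega
  case _ =>
    -- uniqueness
    intro s₂ s₂' h₂ h₂'
    constructor
    · have hA₀in : A₀ ∈ FF n u s₂ := h₂ (Finset.mem_union_left _
        (Finset.mem_inter.mpr ⟨hA₀mem, by
          rw [Fhat, Finset.mem_filter]; exact ⟨hA₀pow, hA₀r, hA₀cnt⟩⟩))
      rw [FF, Finset.mem_filter] at hA₀in
      have hcond := hA₀in.2
      rcases le_or_gt (u + 2 * s₂) n with hle | hlt
      · have h1 : 2 * S10.cc A₀ (u + 2 * s₂) ≤ (u + 2 * s₂) + u :=
          S10.not_reach hA₀r _ hle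
        have h2 : 2 * S10.cc A₀ (u + 2 * s₂) = (u + 2 * s₂) + u := by
          unfold S10.cc at h1 ⊢
          omega
        have := S10.hit_eq hA₀cnt hle hj₀n h2 hA₀hit
        omega
      · exfalso
        have h1 : A₀ ∩ Finset.Icc 1 (u + 2 * s₂) = A₀ :=
          Finset.inter_eq_left.mpr (hA₀n.trans (Finset.Icc_subset_Icc_right (by omega)))
        rw [h1] at hcond
        have h2 : A₀ ∩ Finset.Icc 1 n = A₀ := Finset.inter_eq_left.mpr hA₀n
        have h3 : 2 * S10.cc A₀ n ≤ n + u := S10.not_reach hA₀r n le_rfl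
        unfold S10.cc at h3
        rw [h2] at h3
        omega
    · have hB₀in : B₀ ∈ FF n v s₂' := h₂' (Finset.mem_union_left _
        (Finset.mem_inter.mpr ⟨hB₀mem, by
          rw [Fhat, Finset.mem_filter]; exact ⟨hB₀pow, hB₀r, hB₀cnt⟩⟩))
      rw [FF, Finset.mem_filter] at hB₀in
      have hcond := hB₀in.2
      rcases le_or_gt (v + 2 * s₂') n with hle | hlt
      · have h1 : 2 * S10.cc B₀ (v + 2 * s₂') ≤ (v + 2 * s₂') + v :=
          S10.not_reach hB₀r _ hle
        have h2 : 2 * S10.cc B₀ (v + 2 * s₂') = (v + 2 * s₂') + v := by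
          unfold S10.cc at h1 ⊢
          omega
        have := S10.hit_eq hB₀cnt hle hj₀n h2 hB₀hit
        omega
      · exfalso
        have h1 : B₀ ∩ Finset.Icc 1 (v + 2 * s₂') = B₀ :=
          Finset.inter_eq_left.mpr (hB₀n.trans (Finset.Icc_subset_Icc_right (by omega)))
        rw [h1] at hcond
        have h2 : B₀ ∩ Finset.Icc 1 n = B₀ := Finset.inter_eq_left.mpr hB₀n
        have h3 : 2 * S10.cc B₀ n ≤ n + v := S10.not_reach hB₀r n le_rfl
        unfold S10.cc at h3
        rw [h2] at h3
        omega
  case _ => omega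
  case _ => omega
end
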